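/- arXiv:2506.23645 — 5 statements merged into one kernel-verified Lean document; each statement's English description precedes it below -/
import Mathlib

section
/- Let α, β ∈ [0,1] and λ ∈ ℂ. Suppose y : [0,1] → ℂ is continuously differentiable, not identically zero, satisfies y′(0) = y′(1) = 0, and satisfies the integrated eigenvalue equation y′(x) = −∫₀ˣ (λ·y(t) − (B(α,β)y)(t)) dt for all x ∈ [0,1]. Then |Im λ| ≤ K and Re λ ≥ −K, where K = ‖V‖_{L∞(0,1)} + ‖Q‖_{L∞(0,1)}. -/
open MeasureTheory Set

/-- Extension by zero outside `(0,1)`. -/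
noncomputable def ext01 (u : ℝ → ℂ) : ℝ → ℂ := Set.indicator (Set.Ioo 0 1) u

/-- The nonlocal term `(B(α,β)u)(x) = V(x)·ũ(x+α) + Q(x)·ũ(x−β)`. -/
noncomputable def Bop (V Q : ℝ → ℂ) (α β : ℝ) (u : ℝ → ℂ) : ℝ → ℂ :=
  fun x => V x * ext01 u (x + α) + Q x * ext01 u (x - β)

/-- `K = ‖V‖_{L∞(0,1)} + ‖Q‖_{L∞(0,1)}`. -/
noncomputable def Knorm (V Q : ℝ → ℂ) : ℝ :=
  (eLpNorm V ⊤ (volume.restrict (Set.Ioo (0:ℝ) 1))).toReal +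
  (eLpNorm Q ⊤ (volume.restrict (Set.Ioo (0:ℝ) 1))).toReal

set_option maxHeartbeats 1000000 in
/-- Any eigenvalue `λ` of the Neumann problem `−y″ + B(α,β)y = λy` (written in
integrated form) satisfies `|Im λ| ≤ K` and `Re λ ≥ −K`. -/
theorem stmt_1 (V Q : ℝ → ℂ) (hVmeas : Measurable V) (hQmeas : Measurable Q)
    (hVb : eLpNorm V ⊤ (volume.restrict (Set.Ioo (0:ℝ) 1)) ≠ ⊤)
    (hQb : eLpNorm Q ⊤ (volume.restrict (Set.Ioo (0:ℝ) 1)) ≠ ⊤)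
    (α β : ℝ) (hα : α ∈ Set.Icc (0:ℝ) 1) (hβ : β ∈ Set.Icc (0:ℝ) 1)
    (lam : ℂ) (y dy : ℝ → ℂ)
    (hyC : ContinuousOn y (Set.Icc (0:ℝ) 1))
    (hdyC : ContinuousOn dy (Set.Icc (0:ℝ) 1))
    (hderiv : ∀ x ∈ Set.Icc (0:ℝ) 1, HasDerivWithinAt y (dy x) (Set.Icc (0:ℝ) 1) x)
    (hnontriv : ∃ x ∈ Set.Icc (0:ℝ) 1, y x ≠ 0)
    (hN0 : dy 0 = 0) (hN1 : dy 1 = 0)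
    (heq : ∀ x ∈ Set.Icc (0:ℝ) 1,
      dy x = -∫ t in (0:ℝ)..x, (lam * y t - Bop V Q α β y t)) :
    |lam.im| ≤ Knorm V Q ∧ -(Knorm V Q) ≤ lam.re := by
  classical
  set μ : Measure ℝ := volume.restrict (Set.Ioo (0:ℝ) 1) with hμ
  haveI : IsFiniteMeasure μ := by
    constructor
    rw [hμ, Measure.restrict_apply_univ, Real.volume_Ioo]
    exact ENNReal.ofReal_lt_top
  set u : ℝ → ℂ := ext01 y with hu_def
  set c : ℝ → ℂ := Set.indicator (Set.Ioo 0 1) dy with hc_def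
  -- measurability
  have hu_meas : Measurable u := by
    have h1 : ContinuousOn y (Set.Ioo (0:ℝ) 1) := hyC.mono Set.Ioo_subset_Icc_self
    have h2 := ContinuousOn.measurable_piecewise (g := fun _ => (0:ℂ)) h1
      continuousOn_const measurableSet_Ioo
    have h3 : u = (Set.Ioo (0:ℝ) 1).piecewise y (fun _ => (0:ℂ)) := by
      ext x; by_cases hx : x ∈ Set.Ioo (0:ℝ) 1 <;>
        simp [hu_def, ext01, Set.indicator, Set.piecewise, hx]
    rw [h3]; exact h2
  have hc_meas : Measurable c := by
    have h1 : ContinuousOn dy (Set.Ioo (0:ℝ) 1) := hdyC.mono Set.Ioo_subset_Icc_self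
    have h2 := ContinuousOn.measurable_piecewise (g := fun _ => (0:ℂ)) h1
      continuousOn_const measurableSet_Ioo
    have h3 : c = (Set.Ioo (0:ℝ) 1).piecewise dy (fun _ => (0:ℂ)) := by
      ext x; by_cases hx : x ∈ Set.Ioo (0:ℝ) 1 <;>
        simp [hc_def, Set.indicator, Set.piecewise, hx]
    rw [h3]; exact h2
  -- bounds
  obtain ⟨M, hM⟩ := isCompact_Icc.exists_bound_of_continuousOn hyC
  have hM0 : 0 ≤ M := le_trans (norm_nonneg _) (hM 0 (by norm_num))
  have hu_bdd : ∀ x, ‖u x‖ ≤ M := by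
    intro x
    by_cases hx : x ∈ Set.Ioo (0:ℝ) 1
    · rw [hu_def]; rw [ext01, Set.indicator_of_mem hx]
      exact hM x (Set.Ioo_subset_Icc_self hx)
    · rw [hu_def]; rw [ext01, Set.indicator_of_notMem hx]; simpa using hM0
  obtain ⟨Md, hMd⟩ := isCompact_Icc.exists_bound_of_continuousOn hdyC
  have hMd0 : 0 ≤ Md := le_trans (norm_nonneg _) (hMd 0 (by norm_num))
  have hc_bdd : ∀ x, ‖c x‖ ≤ Md := by
    intro x
    by_cases hx : x ∈ Set.Ioo (0:ℝ) 1
    · rw [hc_def]; rw [Set.indicator_of_mem hx]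
      exact hMd x (Set.Ioo_subset_Icc_self hx)
    · rw [hc_def]; rw [Set.indicator_of_notMem hx]; simpa using hMd0
  have hconj_meas : Measurable fun z : ℂ => (starRingEnd ℂ) z := by
    exact (RCLike.continuous_conj (K := ℂ)).measurable
  have hu_eq : ∀ t ∈ Set.Ioo (0:ℝ) 1, u t = y t := fun t ht => Set.indicator_of_mem ht y
  have hc_eq : ∀ t ∈ Set.Ioo (0:ℝ) 1, c t = dy t := fun t ht => Set.indicator_of_mem ht dy
  -- essential sup bounds
  set KV : ℝ := (eLpNorm V ⊤ μ).toReal with hKV_def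
  set KQ : ℝ := (eLpNorm Q ⊤ μ).toReal with hKQ_def
  have hKV0 : 0 ≤ KV := ENNReal.toReal_nonneg
  have hKQ0 : 0 ≤ KQ := ENNReal.toReal_nonneg
  have hVae : ∀ᵐ t ∂μ, ‖V t‖ ≤ KV := by
    filter_upwards [ae_le_eLpNormEssSup (f := V) (μ := μ)] with t ht
    have h2 : (‖V t‖₊ : ENNReal) ≤ eLpNorm V ⊤ μ := by rwa [eLpNorm_exponent_top]
    calc ‖V t‖ = ((‖V t‖₊ : ENNReal)).toReal := by simp
      _ ≤ KV := ENNReal.toReal_mono hVb h2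
  have hQae : ∀ᵐ t ∂μ, ‖Q t‖ ≤ KQ := by
    filter_upwards [ae_le_eLpNormEssSup (f := Q) (μ := μ)] with t ht
    have h2 : (‖Q t‖₊ : ENNReal) ≤ eLpNorm Q ⊤ μ := by rwa [eLpNorm_exponent_top]
    calc ‖Q t‖ = ((‖Q t‖₊ : ENNReal)).toReal := by simp
      _ ≤ KQ := ENNReal.toReal_mono hQb h2
  set A : Set ℝ := {t | ‖V t‖ ≤ KV ∧ ‖Q t‖ ≤ KQ} with hA_def
  have hA : ∀ᵐ t ∂μ, t ∈ A := hVae.and hQae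
  -- the function f rewritten with u
  set ft : ℝ → ℂ := fun t => lam * u t - (V t * u (t + α) + Q t * u (t - β)) with hft_def
  have hft_meas : Measurable ft := by
    apply Measurable.sub
    · exact hu_meas.const_mul lam
    · exact ((hVmeas.mul (hu_meas.comp (measurable_add_const α))).add
        (hQmeas.mul (hu_meas.comp (measurable_sub_const β))))
  set Cf : ℝ := ‖lam‖ * M + (KV * M + KQ * M) with hCf_def
  have hCf0 : 0 ≤ Cf := by positivity
  have hft_bdd : ∀ t, t ∈ A → ‖ft t‖ ≤ Cf := by
    intro t ht
    have h1 : ‖lam * u t‖ ≤ ‖lam‖ * M := by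
      rw [norm_mul]; exact mul_le_mul_of_nonneg_left (hu_bdd t) (norm_nonneg lam)
    have h2 : ‖V t * u (t + α)‖ ≤ KV * M := by
      rw [norm_mul]
      exact mul_le_mul ht.1 (hu_bdd _) (norm_nonneg _) hKV0
    have h3 : ‖Q t * u (t - β)‖ ≤ KQ * M := by
      rw [norm_mul]
      exact mul_le_mul ht.2 (hu_bdd _) (norm_nonneg _) hKQ0
    calc ‖ft t‖ ≤ ‖lam * u t‖ + ‖V t * u (t + α) + Q t * u (t - β)‖ := norm_sub_le _ _
      _ ≤ ‖lam‖ * M + (KV * M + KQ * M) := by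
          have := norm_add_le (V t * u (t + α)) (Q t * u (t - β))
          linarith
  have hft_int : Integrable ft μ := by
    refine (integrable_const Cf).mono' hft_meas.aestronglyMeasurable ?_
    filter_upwards [hA] with t ht using hft_bdd t ht
  -- rewrite the integral equation
  have hfeq : ∀ t ∈ Set.Ioo (0:ℝ) 1, (lam * y t - Bop V Q α β y t) = ft t := by
    intro t ht
    rw [hft_def]
    simp only [Bop]
    rw [hu_eq t ht]
  have heq' : ∀ x ∈ Set.Icc (0:ℝ) 1, dy x = -∫ t in Set.Ioo (0:ℝ) x, ft t := by
    intro x hx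
    rw [heq x hx, intervalIntegral.integral_of_le hx.1, integral_Ioc_eq_integral_Ioo]
    congr 1
    apply setIntegral_congr_fun measurableSet_Ioo
    intro t ht
    exact hfeq t ⟨ht.1, lt_of_lt_of_le ht.2 hx.2⟩
  have hft_total : ∫ t, ft t ∂μ = 0 := by
    have h1 := heq' 1 (by norm_num)
    rw [hN1, eq_comm, neg_eq_zero] at h1
    rw [hμ]
    exact h1
  -- the Fubini function
  set G : ℝ → ℝ → ℂ := fun t s => if t ≤ s then ft t * (starRingEnd ℂ) (c s) else 0
    with hG_def
  have hG_meas : Measurable (Function.uncurry G) := by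
    apply Measurable.ite (measurableSet_le measurable_fst measurable_snd)
    · exact (hft_meas.comp measurable_fst).mul (hconj_meas.comp (hc_meas.comp measurable_snd))
    · exact measurable_const
  have hG_int : Integrable (Function.uncurry G) (μ.prod μ) := by
    have hAmem : ∀ᵐ p : ℝ × ℝ ∂(μ.prod μ), p.1 ∈ A := by
      rw [ae_iff] at hA ⊢
      have hsub : {p : ℝ × ℝ | ¬ p.1 ∈ A} ⊆ {t : ℝ | ¬ t ∈ A} ×ˢ (Set.univ : Set ℝ) :=
        fun p hp => ⟨hp, trivial⟩
      refine measure_mono_null hsub ?_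
      rw [Measure.prod_prod, hA, zero_mul]
    refine (integrable_const (Cf * Md)).mono' hG_meas.aestronglyMeasurable ?_
    filter_upwards [hAmem] with p hp
    rw [Function.uncurry]
    by_cases h : p.1 ≤ p.2
    · rw [hG_def]; simp only [h, if_true]
      rw [norm_mul, RCLike.norm_conj]
      exact mul_le_mul (hft_bdd _ hp) (hc_bdd _) (norm_nonneg _) hCf0
    · rw [hG_def]; simp only [h, if_false, norm_zero]
      positivity
  have hswap : (∫ t, ∫ s, G t s ∂μ ∂μ) = ∫ s, ∫ t, G t s ∂μ ∂μ :=
    integral_integral_swap hG_int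
  -- inner integral, left side
  have hinner : ∀ t ∈ Set.Ioo (0:ℝ) 1,
      (∫ s, G t s ∂μ) = ft t * (starRingEnd ℂ) (y 1 - y t) := by
    intro t ht
    have h1 : ∀ s, G t s
        = ft t * Set.indicator (Set.Ici t) (fun s => (starRingEnd ℂ) (c s)) s := by
      intro s
      by_cases hs : t ≤ s
      · rw [hG_def]; simp only [hs, if_true]
        rw [Set.indicator_of_mem (Set.mem_Ici.mpr hs)]
      · rw [hG_def]; simp only [hs, if_false]
        rw [Set.indicator_of_notMem (by simpa using hs), mul_zero]
    have hIciIoo : Set.Ici t ∩ Set.Ioo (0:ℝ) 1 = Set.Ico t 1 := by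
      ext s
      simp only [Set.mem_inter_iff, Set.mem_Ici, Set.mem_Ioo, Set.mem_Ico]
      constructor
      · rintro ⟨h1, h2, h3⟩; exact ⟨h1, h3⟩
      · rintro ⟨h1, h2⟩; exact ⟨h1, lt_of_lt_of_le ht.1 h1, h2⟩
    have hFTC : ∫ s in Set.Ioo t 1, dy s = y 1 - y t := by
      have hle : t ≤ 1 := le_of_lt ht.2
      have hcont : ContinuousOn y (Set.Icc t 1) :=
        hyC.mono (Set.Icc_subset_Icc (le_of_lt ht.1) le_rfl)
      have hder : ∀ x ∈ Set.Ioo t 1, HasDerivWithinAt y (dy x) (Set.Ioi x) x := by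
        intro x hx
        have hx01 : x ∈ Set.Ioo (0:ℝ) 1 := ⟨lt_trans ht.1 hx.1, hx.2⟩
        have := (hderiv x (Set.Ioo_subset_Icc_self hx01)).hasDerivAt
          (Icc_mem_nhds hx01.1 hx01.2)
        exact this.hasDerivWithinAt
      have hint : IntervalIntegrable dy volume t 1 := by
        apply ContinuousOn.intervalIntegrable
        rw [Set.uIcc_of_le hle]
        exact hdyC.mono (Set.Icc_subset_Icc (le_of_lt ht.1) le_rfl)
      have := intervalIntegral.integral_eq_sub_of_hasDeriv_right_of_le hle hcont hder hint
      rw [intervalIntegral.integral_of_le hle, integral_Ioc_eq_integral_Ioo] at this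
      exact this
    calc (∫ s, G t s ∂μ)
        = ∫ s, ft t * Set.indicator (Set.Ici t) (fun s => (starRingEnd ℂ) (c s)) s ∂μ := by
          exact integral_congr_ae (Filter.Eventually.of_forall h1)
      _ = ft t * ∫ s, Set.indicator (Set.Ici t) (fun s => (starRingEnd ℂ) (c s)) s ∂μ :=
          integral_const_mul _ _
      _ = ft t * ∫ s in Set.Ici t, (starRingEnd ℂ) (c s) ∂μ := by
          rw [integral_indicator measurableSet_Ici]
      _ = ft t * ∫ s in Set.Ioo t 1, (starRingEnd ℂ) (dy s) := by
          rw [hμ, Measure.restrict_restrict measurableSet_Ici, hIciIoo,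
            integral_Ico_eq_integral_Ioo]
          congr 1
          apply setIntegral_congr_fun measurableSet_Ioo
          intro s hs
          show (starRingEnd ℂ) (c s) = (starRingEnd ℂ) (dy s)
          rw [hc_eq s ⟨lt_trans ht.1 hs.1, hs.2⟩]
      _ = ft t * (starRingEnd ℂ) (∫ s in Set.Ioo t 1, dy s) := by rw [integral_conj]
      _ = ft t * (starRingEnd ℂ) (y 1 - y t) := by rw [hFTC]
  -- inner integral, right side
  have hinner2 : ∀ s ∈ Set.Ioo (0:ℝ) 1,
      (∫ t, G t s ∂μ) = -(dy s * (starRingEnd ℂ) (dy s)) := by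
    intro s hs
    have h1 : ∀ t, G t s = Set.indicator (Set.Iic s) ft t * (starRingEnd ℂ) (c s) := by
      intro t
      by_cases h : t ≤ s
      · rw [hG_def]; simp only [h, if_true]
        rw [Set.indicator_of_mem (Set.mem_Iic.mpr h)]
      · rw [hG_def]; simp only [h, if_false]
        rw [Set.indicator_of_notMem (by simpa using h), zero_mul]
    have hIicIoo : Set.Iic s ∩ Set.Ioo (0:ℝ) 1 = Set.Ioc 0 s := by
      ext t
      simp only [Set.mem_inter_iff, Set.mem_Iic, Set.mem_Ioo, Set.mem_Ioc]
      constructor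
      · rintro ⟨h1, h2, h3⟩; exact ⟨h2, h1⟩
      · rintro ⟨h1, h2⟩; exact ⟨h2, h1, lt_of_le_of_lt h2 hs.2⟩
    have hval : (∫ t in Set.Ioo (0:ℝ) s, ft t) = -dy s := by
      rw [heq' s (Set.Ioo_subset_Icc_self hs), neg_neg]
    calc (∫ t, G t s ∂μ)
        = ∫ t, Set.indicator (Set.Iic s) ft t * (starRingEnd ℂ) (c s) ∂μ :=
          integral_congr_ae (Filter.Eventually.of_forall h1)
      _ = (∫ t, Set.indicator (Set.Iic s) ft t ∂μ) * (starRingEnd ℂ) (c s) :=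
          integral_mul_const _ _
      _ = (∫ t in Set.Ioo (0:ℝ) s, ft t) * (starRingEnd ℂ) (dy s) := by
          rw [integral_indicator measurableSet_Iic, hμ,
            Measure.restrict_restrict measurableSet_Iic, hIicIoo,
            integral_Ioc_eq_integral_Ioo, hc_eq s hs]
      _ = -(dy s * (starRingEnd ℂ) (dy s)) := by rw [hval]; ring
  -- assemble LHS
  set J' : ℂ := ∫ t, ft t * (starRingEnd ℂ) (u t) ∂μ with hJ'_def
  have hftu_int : Integrable (fun t => ft t * (starRingEnd ℂ) (u t)) μ := by
    refine (integrable_const (Cf * M)).mono'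
      ((hft_meas.mul (hconj_meas.comp hu_meas)).aestronglyMeasurable) ?_
    filter_upwards [hA] with t ht
    rw [norm_mul, RCLike.norm_conj]
    exact mul_le_mul (hft_bdd t ht) (hu_bdd t) (norm_nonneg _) hCf0
  have hLHS : (∫ t, ∫ s, G t s ∂μ ∂μ) = -J' := by
    have e1 : (fun t => ∫ s, G t s ∂μ)
        =ᵐ[μ] fun t => ft t * (starRingEnd ℂ) (y 1) - ft t * (starRingEnd ℂ) (u t) := by
      filter_upwards [ae_restrict_mem measurableSet_Ioo] with t ht
      rw [hinner t ht, map_sub, mul_sub, hu_eq t ht]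
    rw [integral_congr_ae e1, integral_sub (hft_int.mul_const _) hftu_int,
      integral_mul_const, hft_total, zero_mul, zero_sub]
  -- assemble RHS
  set D : ℝ := ∫ s, ‖c s‖^2 ∂μ with hD_def
  have hcsq_int : Integrable (fun s => ‖c s‖^2) μ := by
    refine (integrable_const (Md^2)).mono'
      ((hc_meas.norm.pow_const 2).aestronglyMeasurable) ?_
    refine Filter.Eventually.of_forall fun s => ?_
    rw [Real.norm_eq_abs, abs_of_nonneg (by positivity)]
    have := hc_bdd s
    nlinarith [norm_nonneg (c s)]
  have hRHS : (∫ s, ∫ t, G t s ∂μ ∂μ) = -(D : ℂ) := by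
    have e1 : (fun s => ∫ t, G t s ∂μ) =ᵐ[μ] fun s => -((‖c s‖^2 : ℝ) : ℂ) := by
      filter_upwards [ae_restrict_mem measurableSet_Ioo] with s hs
      rw [hinner2 s hs, ← hc_eq s hs, Complex.mul_conj]
      norm_cast
      rw [Complex.normSq_eq_norm_sq]
    rw [integral_congr_ae e1, integral_neg, hD_def]
    exact congrArg Neg.neg integral_ofReal
  have hJ'D : J' = (D : ℂ) := by
    have := hswap
    rw [hLHS, hRHS] at this
    exact neg_injective this
  -- expand J'
  set W : ℝ → ℂ := fun t => V t * u (t + α) + Q t * u (t - β) with hW_def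
  set J : ℂ := ∫ t, W t * (starRingEnd ℂ) (u t) ∂μ with hJ_def
  set I2 : ℝ := ∫ t, ‖u t‖^2 ∂μ with hI2_def
  have hW_meas : Measurable W :=
    (hVmeas.mul (hu_meas.comp (measurable_add_const α))).add
      (hQmeas.mul (hu_meas.comp (measurable_sub_const β)))
  have hW_bdd : ∀ t ∈ A, ‖W t‖ ≤ KV * M + KQ * M := by
    intro t ht
    calc ‖W t‖ ≤ ‖V t * u (t + α)‖ + ‖Q t * u (t - β)‖ := norm_add_le _ _
      _ ≤ KV * M + KQ * M := by
          rw [norm_mul, norm_mul]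
          have h1 : ‖V t‖ * ‖u (t + α)‖ ≤ KV * M :=
            mul_le_mul ht.1 (hu_bdd _) (norm_nonneg _) hKV0
          have h2 : ‖Q t‖ * ‖u (t - β)‖ ≤ KQ * M :=
            mul_le_mul ht.2 (hu_bdd _) (norm_nonneg _) hKQ0
          linarith
  have hWu_int : Integrable (fun t => W t * (starRingEnd ℂ) (u t)) μ := by
    refine (integrable_const ((KV * M + KQ * M) * M)).mono'
      ((hW_meas.mul (hconj_meas.comp hu_meas)).aestronglyMeasurable) ?_
    filter_upwards [hA] with t ht
    rw [norm_mul, RCLike.norm_conj]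
    exact mul_le_mul (hW_bdd t ht) (hu_bdd t) (norm_nonneg _) (by positivity)
  have huu_int : Integrable (fun t => lam * (u t * (starRingEnd ℂ) (u t))) μ := by
    refine (integrable_const (‖lam‖ * (M * M))).mono'
      (((hu_meas.mul (hconj_meas.comp hu_meas)).const_mul lam).aestronglyMeasurable) ?_
    refine Filter.Eventually.of_forall fun t => ?_
    rw [norm_mul, norm_mul, RCLike.norm_conj]
    gcongr
    · exact hu_bdd t
    · exact hu_bdd t
  have husq_int : Integrable (fun t => ‖u t‖^2) μ := by
    refine (integrable_const (M^2)).mono'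
      ((hu_meas.norm.pow_const 2).aestronglyMeasurable) ?_
    refine Filter.Eventually.of_forall fun t => ?_
    rw [Real.norm_eq_abs, abs_of_nonneg (by positivity)]
    have := hu_bdd t
    nlinarith [norm_nonneg (u t)]
  have hkey : lam * (I2 : ℂ) = (D : ℂ) + J := by
    have e1 : ∀ t, ft t * (starRingEnd ℂ) (u t)
        = lam * (u t * (starRingEnd ℂ) (u t)) - W t * (starRingEnd ℂ) (u t) := by
      intro t; rw [hft_def, hW_def]; ring
    have e2 : J' = lam * (I2 : ℂ) - J := by
      rw [hJ'_def]
      rw [integral_congr_ae (Filter.Eventually.of_forall e1),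
        integral_sub huu_int hWu_int, integral_const_mul]
      congr 2
      have e3 : ∀ t, u t * (starRingEnd ℂ) (u t) = ((‖u t‖^2 : ℝ) : ℂ) := by
        intro t
        rw [Complex.mul_conj]
        norm_cast
        rw [Complex.normSq_eq_norm_sq]
      rw [integral_congr_ae (Filter.Eventually.of_forall e3), hI2_def]
      exact integral_ofReal
    rw [← hJ'D, e2]
    ring
  -- positivity of I2
  have hI2pos : 0 < I2 := by
    obtain ⟨x₀, hx₀Icc, hx₀⟩ := hnontriv
    have hcw : ContinuousWithinAt y (Set.Icc (0:ℝ) 1) x₀ := hyC x₀ hx₀Icc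
    have hmem : ({0}ᶜ : Set ℂ) ∈ nhds (y x₀) :=
      isOpen_compl_singleton.mem_nhds (by simpa using hx₀)
    obtain ⟨δ, hδ, hball⟩ := Metric.mem_nhdsWithin_iff.mp (hcw hmem)
    set a : ℝ := max 0 (x₀ - δ) with ha_def
    set b : ℝ := min 1 (x₀ + δ) with hb_def
    obtain ⟨h0, h1⟩ := hx₀Icc
    have hab : a < b := by
      rw [ha_def, hb_def, max_lt_iff, lt_min_iff, lt_min_iff]
      refine ⟨⟨?_, ?_⟩, ?_, ?_⟩ <;> linarith
    have hsub : Set.Ioo a b ⊆ Function.support (fun t => ‖u t‖^2) ∩ Set.Ioo (0:ℝ) 1 := by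
      intro x hx
      have hx01 : x ∈ Set.Ioo (0:ℝ) 1 :=
        ⟨lt_of_le_of_lt (le_max_left 0 _) hx.1, lt_of_lt_of_le hx.2 (min_le_left 1 _)⟩
      have hxIcc : x ∈ Set.Icc (0:ℝ) 1 := Set.Ioo_subset_Icc_self hx01
      have hxball : x ∈ Metric.ball x₀ δ := by
        rw [Metric.mem_ball, Real.dist_eq, abs_sub_lt_iff]
        have h2 := hx.1
        have h3 := hx.2
        have h4 := le_max_right 0 (x₀ - δ)
        have h5 := min_le_right 1 (x₀ + δ)
        constructor <;> linarith
      have hyne : y x ≠ 0 := by simpa using hball ⟨hxball, hxIcc⟩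
      refine ⟨?_, hx01⟩
      rw [Function.mem_support, hu_eq x hx01]
      simp [pow_eq_zero_iff, hyne]
    have hpos : 0 < (volume : Measure ℝ)
        (Function.support (fun t => ‖u t‖^2) ∩ Set.Ioo (0:ℝ) 1) := by
      refine lt_of_lt_of_le ?_ (measure_mono hsub)
      rw [Real.volume_Ioo]
      exact ENNReal.ofReal_pos.mpr (by linarith)
    rw [hI2_def, hμ]
    refine (setIntegral_pos_iff_support_of_nonneg_ae ?_ ?_).mpr hpos
    · exact Filter.Eventually.of_forall fun t => by positivity
    · exact husq_int
  -- bound on J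
  have hindic : (fun x : ℝ => ‖u x‖^2)
      = Set.indicator (Set.Ioo (0:ℝ) 1) (fun x => ‖u x‖^2) := by
    ext x
    by_cases hx : x ∈ Set.Ioo (0:ℝ) 1
    · rw [Set.indicator_of_mem hx]
    · rw [Set.indicator_of_notMem hx, hu_def, ext01, Set.indicator_of_notMem hx]
      simp
  have husq_global : Integrable (fun x : ℝ => ‖u x‖^2) volume := by
    rw [hindic]
    exact (integrable_indicator_iff measurableSet_Ioo).mpr husq_int
  have hprod_int : ∀ γ : ℝ, Integrable (fun t => ‖u (t + γ)‖ * ‖u t‖) μ := by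
    intro γ
    have hmeasγ : Measurable fun t => ‖u (t + γ)‖ := (hu_meas.comp (measurable_add_const γ)).norm
    refine (integrable_const (M * M)).mono' ((hmeasγ.mul hu_meas.norm).aestronglyMeasurable) ?_
    refine Filter.Eventually.of_forall fun t => ?_
    rw [Real.norm_eq_abs, abs_of_nonneg (by positivity)]
    exact mul_le_mul (hu_bdd _) (hu_bdd _) (norm_nonneg _) hM0
  have hSγ : ∀ γ : ℝ, (∫ t, ‖u (t + γ)‖ * ‖u t‖ ∂μ) ≤ I2 := by
    intro γ
    have hmeasγ : Measurable fun t => ‖u (t + γ)‖ := (hu_meas.comp (measurable_add_const γ)).norm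
    have hint2 : Integrable (fun t => ‖u (t + γ)‖^2) μ := by
      refine (integrable_const (M^2)).mono' ((hmeasγ.pow_const 2).aestronglyMeasurable) ?_
      refine Filter.Eventually.of_forall fun t => ?_
      rw [Real.norm_eq_abs, abs_of_nonneg (by positivity)]
      have := hu_bdd (t + γ)
      nlinarith [norm_nonneg (u (t + γ))]
    have step1 : (∫ t, ‖u (t + γ)‖ * ‖u t‖ ∂μ) ≤ ∫ t, (‖u (t + γ)‖^2 + ‖u t‖^2)/2 ∂μ := by
      refine integral_mono (hprod_int γ) ((hint2.add husq_int).div_const 2) fun t => ?_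
      nlinarith [sq_nonneg (‖u (t + γ)‖ - ‖u t‖)]
    have htrans_int : Integrable (fun x : ℝ => ‖u (x + γ)‖^2) volume := by
      have h6 := (measurePreserving_add_right volume γ).integrable_comp
        husq_global.aestronglyMeasurable
      exact h6.mpr husq_global
    have step2 : (∫ t, ‖u (t + γ)‖^2 ∂μ) ≤ I2 := by
      have h3 : (∫ t, ‖u (t + γ)‖^2 ∂μ) ≤ ∫ t : ℝ, ‖u (t + γ)‖^2 := by
        rw [hμ]
        exact setIntegral_le_integral htrans_int
          (Filter.Eventually.of_forall fun t => by positivity)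
      have h4 : (∫ t : ℝ, ‖u (t + γ)‖^2) = ∫ t : ℝ, ‖u t‖^2 :=
        integral_add_right_eq_self (μ := volume) (fun x : ℝ => ‖u x‖^2) γ
      have h5 : (∫ t : ℝ, ‖u t‖^2) = I2 := by
        conv_lhs => rw [hindic]
        rw [integral_indicator measurableSet_Ioo, hI2_def, hμ]
      linarith
    have step3 : (∫ t, (‖u (t + γ)‖^2 + ‖u t‖^2)/2 ∂μ) ≤ I2 := by
      rw [integral_div, integral_add hint2 husq_int]
      have h5 : (∫ t, ‖u t‖^2 ∂μ) = I2 := hI2_def.symm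
      linarith
    linarith
  have hJnorm : ‖J‖ ≤ (KV + KQ) * I2 := by
    have hae_bound : ∀ᵐ t ∂μ, ‖W t * (starRingEnd ℂ) (u t)‖
        ≤ KV * (‖u (t + α)‖ * ‖u t‖) + KQ * (‖u (t + (-β))‖ * ‖u t‖) := by
      filter_upwards [hA] with t ht
      rw [norm_mul, RCLike.norm_conj]
      have key : ‖W t‖ ≤ KV * ‖u (t + α)‖ + KQ * ‖u (t - β)‖ := by
        have k1 : ‖W t‖ ≤ ‖V t‖ * ‖u (t + α)‖ + ‖Q t‖ * ‖u (t - β)‖ := by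
          rw [hW_def]
          refine (norm_add_le _ _).trans (le_of_eq ?_)
          rw [norm_mul, norm_mul]
        have k2 := mul_le_mul_of_nonneg_right ht.1 (norm_nonneg (u (t + α)))
        have k3 := mul_le_mul_of_nonneg_right ht.2 (norm_nonneg (u (t - β)))
        linarith
      have key2 := mul_le_mul_of_nonneg_right key (norm_nonneg (u t))
      calc ‖W t‖ * ‖u t‖ ≤ (KV * ‖u (t + α)‖ + KQ * ‖u (t - β)‖) * ‖u t‖ := key2
        _ = KV * (‖u (t + α)‖ * ‖u t‖) + KQ * (‖u (t + (-β))‖ * ‖u t‖) := by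
            rw [sub_eq_add_neg]; ring
    have hint_rhs : Integrable
        (fun t => KV * (‖u (t + α)‖ * ‖u t‖) + KQ * (‖u (t + (-β))‖ * ‖u t‖)) μ :=
      ((hprod_int α).const_mul KV).add ((hprod_int (-β)).const_mul KQ)
    have h2 : (∫ t, ‖W t * (starRingEnd ℂ) (u t)‖ ∂μ)
        ≤ ∫ t, (KV * (‖u (t + α)‖ * ‖u t‖) + KQ * (‖u (t + (-β))‖ * ‖u t‖)) ∂μ :=
      integral_mono_ae hWu_int.norm hint_rhs hae_bound
    have h3 : (∫ t, (KV * (‖u (t + α)‖ * ‖u t‖) + KQ * (‖u (t + (-β))‖ * ‖u t‖)) ∂μ)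
        = KV * (∫ t, ‖u (t + α)‖ * ‖u t‖ ∂μ) + KQ * (∫ t, ‖u (t + (-β))‖ * ‖u t‖ ∂μ) := by
      rw [integral_add ((hprod_int α).const_mul KV) ((hprod_int (-β)).const_mul KQ),
        integral_const_mul, integral_const_mul]
    have h4 : ‖J‖ ≤ ∫ t, ‖W t * (starRingEnd ℂ) (u t)‖ ∂μ := by
      rw [hJ_def]
      exact norm_integral_le_integral_norm _
    have h5 := mul_le_mul_of_nonneg_left (hSγ α) hKV0
    have h6 := mul_le_mul_of_nonneg_left (hSγ (-β)) hKQ0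
    calc ‖J‖ ≤ KV * (∫ t, ‖u (t + α)‖ * ‖u t‖ ∂μ)
          + KQ * (∫ t, ‖u (t + (-β))‖ * ‖u t‖ ∂μ) := by rw [← h3]; exact h4.trans h2
      _ ≤ KV * I2 + KQ * I2 := by linarith
      _ = (KV + KQ) * I2 := by ring
  -- conclusion
  have hKnorm : Knorm V Q = KV + KQ := rfl
  have hD0 : 0 ≤ D := by
    rw [hD_def]
    exact integral_nonneg fun s => by positivity
  have hIm : lam.im * I2 = J.im := by
    have h := congrArg Complex.im hkey
    simpa [Complex.add_im, Complex.mul_im] using h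
  have hRe : lam.re * I2 = D + J.re := by
    have h := congrArg Complex.re hkey
    simpa [Complex.add_re, Complex.mul_re] using h
  constructor
  · rw [hKnorm]
    have h1 : |lam.im| * I2 ≤ (KV + KQ) * I2 := by
      calc |lam.im| * I2 = |lam.im * I2| := by
            rw [abs_mul, abs_of_pos hI2pos]
        _ = |J.im| := by rw [hIm]
        _ ≤ ‖J‖ := by exact Complex.abs_im_le_norm J
        _ ≤ (KV + KQ) * I2 := hJnorm
    exact le_of_mul_le_mul_right h1 hI2pos
  · rw [hKnorm]
    have h2 : J.re ≥ -‖J‖ := by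
      have := Complex.abs_re_le_norm J
      cases' abs_le.mp this with h _
      linarith
    have h1 : (-(KV + KQ)) * I2 ≤ lam.re * I2 := by
      rw [hRe]
      have := hJnorm
      nlinarith
    exact le_of_mul_le_mul_right h1 hI2pos
end

section
/- There exists a constant C > 0 such that for all 0 ≤ α ≤ β ≤ 1 and every continuously differentiable u : [0,1] → ℂ, one has ∫₀¹ |ũ(x−α) − ũ(x−β)|² dx ≤ C·(β − α)·( ∫₀¹|u(t)|² dt + ∫₀¹|u′(t)|² dt ). -/
open MeasureTheory Set

lemma aux_cs {I d B : ℝ} (hI : 0 ≤ I) (hd : 0 < d) (hB : 0 ≤ B)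
    (h : ∀ l : ℝ, 0 < l → 2 * I ≤ l * d + B / l) : I ^ 2 ≤ d * B := by
  rcases eq_or_lt_of_le hB with hB0 | hB0
  · have hI0 : I ≤ 0 := by
      by_contra hc
      push_neg at hc
      have h2 := h (I / d) (by positivity)
      rw [← hB0] at h2
      rw [div_mul_cancel₀ _ hd.ne'] at h2
      simp at h2
      nlinarith
    nlinarith
  · set l := Real.sqrt (B / d) with hl_def
    have hl : 0 < l := Real.sqrt_pos.2 (by positivity)
    have h2 := h l hl
    have hs : l * l = B / d := by
      have := Real.sq_sqrt (show (0:ℝ) ≤ B / d by positivity)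
      rw [← hl_def] at this
      nlinarith
    have h4 : (l * d + B / l) * l = B + B := by
      have e1 : B / l * l = B := div_mul_cancel₀ _ hl.ne'
      calc (l * d + B / l) * l = (l * l) * d + (B / l) * l := by ring
      _ = (B / d) * d + B := by rw [hs, e1]
      _ = B + B := by rw [div_mul_cancel₀ _ hd.ne']
    have h3 : 2 * I * l ≤ (l * d + B / l) * l :=
      mul_le_mul_of_nonneg_right h2 hl.le
    have h5 : I * l ≤ B := by nlinarith
    have h6 : (I * l) ^ 2 ≤ B ^ 2 := pow_le_pow_left₀ (mul_nonneg hI hl.le) h5 2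
    have h7 : I ^ 2 * (B / d) ≤ B ^ 2 := by
      calc I ^ 2 * (B / d) = (I * l) ^ 2 := by rw [← hs]; ring
      _ ≤ B ^ 2 := h6
    by_contra hc
    push_neg at hc
    have h8 := mul_lt_mul_of_pos_right hc (div_pos hB0 hd)
    have hdb : d * B * (B / d) = B ^ 2 := by field_simp
    linarith

lemma aux_sup (u du : ℝ → ℂ) (hu : ContinuousOn u (Icc 0 1)) (hdu : ContinuousOn du (Icc 0 1))
    (hderiv : ∀ x ∈ Icc (0:ℝ) 1, HasDerivWithinAt u (du x) (Icc 0 1) x) :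
    ∀ t ∈ Icc (0:ℝ) 1,
      ‖u t‖ ^ 2 ≤ 2 * (∫ s in Ioo (0:ℝ) 1, ‖u s‖ ^ 2) + ∫ s in Ioo (0:ℝ) 1, ‖du s‖ ^ 2 := by
  set F : ℝ → ℝ := fun t => (u t).re * (u t).re + (u t).im * (u t).im with hF_def
  set dF : ℝ → ℝ := fun t =>
    ((du t).re * (u t).re + (u t).re * (du t).re) +
      ((du t).im * (u t).im + (u t).im * (du t).im) with hdF_def
  have hFeq : ∀ s, ‖u s‖ ^ 2 = F s := fun s => by
    simp only [hF_def, ← Complex.normSq_apply, ← Complex.sq_norm]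
  have hdueq : ∀ s, ‖du s‖ ^ 2 = (du s).re * (du s).re + (du s).im * (du s).im := fun s => by
    simp only [← Complex.normSq_apply, ← Complex.sq_norm]
  -- continuity
  have hFc : ContinuousOn F (Icc 0 1) := by
    apply ContinuousOn.add
    · exact (Complex.continuous_re.comp_continuousOn hu).mul
        (Complex.continuous_re.comp_continuousOn hu)
    · exact (Complex.continuous_im.comp_continuousOn hu).mul
        (Complex.continuous_im.comp_continuousOn hu)
  have hdFc : ContinuousOn dF (Icc 0 1) := by
    apply ContinuousOn.add
    · exact ((Complex.continuous_re.comp_continuousOn hdu).mul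
        (Complex.continuous_re.comp_continuousOn hu)).add
        ((Complex.continuous_re.comp_continuousOn hu).mul
        (Complex.continuous_re.comp_continuousOn hdu))
    · exact ((Complex.continuous_im.comp_continuousOn hdu).mul
        (Complex.continuous_im.comp_continuousOn hu)).add
        ((Complex.continuous_im.comp_continuousOn hu).mul
        (Complex.continuous_im.comp_continuousOn hdu))
  -- derivative of F
  have hFd : ∀ t ∈ Icc (0:ℝ) 1, HasDerivWithinAt F (dF t) (Icc 0 1) t := by
    intro t ht
    have h := hderiv t ht
    have hre : HasDerivWithinAt (fun s => (u s).re) ((du t).re) (Icc 0 1) t :=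
      (Complex.reCLM.hasFDerivAt.comp_hasDerivWithinAt t h :)
    have him : HasDerivWithinAt (fun s => (u s).im) ((du t).im) (Icc 0 1) t :=
      (Complex.imCLM.hasFDerivAt.comp_hasDerivWithinAt t h :)
    exact (hre.mul hre).add (him.mul him)
  simp only [hFeq]
  have hIntF : IntegrableOn F (Icc 0 1) (volume : Measure ℝ) := hFc.integrableOn_Icc
  have hIntdF : IntegrableOn (fun s => |dF s|) (Icc 0 1) (volume : Measure ℝ) :=
    hdFc.abs.integrableOn_Icc
  have hIntdu2 : IntegrableOn (fun s => ‖du s‖ ^ 2) (Icc 0 1) (volume : Measure ℝ) :=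
    ((hdu.norm).pow 2).integrableOn_Icc
  obtain ⟨s₀, hs₀, hmin⟩ := isCompact_Icc.exists_isMinOn (⟨0, by norm_num⟩ :
    (Icc (0:ℝ) 1).Nonempty) hFc
  rw [isMinOn_iff] at hmin
  -- F s₀ ≤ ∫ F
  have hvol : (volume (Ioo (0:ℝ) 1)).toReal = 1 := by simp [Real.volume_Ioo]
  have hFs₀ : F s₀ ≤ ∫ s in Ioo (0:ℝ) 1, F s := by
    have h1 : ∫ _ in Ioo (0:ℝ) 1, F s₀ ≤ ∫ s in Ioo (0:ℝ) 1, F s := by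
      apply setIntegral_mono_on
      · exact integrableOn_const (by simp [Real.volume_Ioo])
      · exact hIntF.mono_set Ioo_subset_Icc_self
      · exact measurableSet_Ioo
      · exact fun x hx => hmin x (Ioo_subset_Icc_self hx)
    rwa [setIntegral_const, measureReal_def, hvol, one_smul] at h1
  intro t ht
  -- FTC
  have husub : uIcc s₀ t ⊆ Icc 0 1 := uIcc_subset_Icc hs₀ ht
  have key : ∫ x in s₀..t, dF x = F t - F s₀ := by
    apply intervalIntegral.integral_eq_sub_of_hasDeriv_right (hFc.mono husub)
    · intro x hx
      have hx1 : x ∈ Icc (0:ℝ) 1 :=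
        ⟨le_trans (le_min hs₀.1 ht.1) hx.1.le, le_trans hx.2.le (max_le hs₀.2 ht.2)⟩
      exact (hFd x hx1).mono_of_mem_nhdsWithin
        (Icc_mem_nhdsGT_of_mem ⟨hx1.1, lt_of_lt_of_le hx.2 (max_le hs₀.2 ht.2)⟩)
    · exact (hdFc.mono husub).intervalIntegrable
  have hbd : |∫ x in s₀..t, dF x| ≤ ∫ s in Ioo (0:ℝ) 1, |dF s| := by
    have h0 : |∫ x in s₀..t, dF x| ≤ ∫ s in uIoc s₀ t, |dF s| := by
      simpa only [Real.norm_eq_abs] using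
        (intervalIntegral.norm_integral_le_integral_norm_uIoc (a := s₀) (b := t) (f := dF)
          (μ := volume))
    refine le_trans h0 ?_
    rw [← integral_Icc_eq_integral_Ioo]
    apply setIntegral_mono_set hIntdF
      (Filter.Eventually.of_forall fun x => abs_nonneg _)
    exact Filter.Eventually.of_forall fun x hx =>
      (Ioc_subset_Icc_self.trans (Icc_subset_Icc (le_min hs₀.1 ht.1) (max_le hs₀.2 ht.2))) hx
  have hptbd : ∀ s ∈ Ioo (0:ℝ) 1, |dF s| ≤ F s + ‖du s‖ ^ 2 := by
    intro s _
    rw [hdueq, hF_def, hdF_def]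
    simp only
    rw [abs_le]
    constructor <;>
      nlinarith [sq_nonneg ((u s).re - (du s).re), sq_nonneg ((u s).im - (du s).im),
        sq_nonneg ((u s).re + (du s).re), sq_nonneg ((u s).im + (du s).im)]
  have hdFint : ∫ s in Ioo (0:ℝ) 1, |dF s| ≤
      (∫ s in Ioo (0:ℝ) 1, F s) + ∫ s in Ioo (0:ℝ) 1, ‖du s‖ ^ 2 := by
    rw [← integral_add (hIntF.mono_set Ioo_subset_Icc_self) (hIntdu2.mono_set Ioo_subset_Icc_self)]
    exact setIntegral_mono_on (hIntdF.mono_set Ioo_subset_Icc_self)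
      ((hIntF.mono_set Ioo_subset_Icc_self).add (hIntdu2.mono_set Ioo_subset_Icc_self))
      measurableSet_Ioo hptbd
  have : F t - F s₀ ≤ (∫ s in Ioo (0:ℝ) 1, F s) + ∫ s in Ioo (0:ℝ) 1, ‖du s‖ ^ 2 := by
    rw [← key]
    exact le_trans (le_abs_self _) (le_trans hbd hdFint)
  linarith

/-- Hölder-`1/2` continuity of the translation operators from `W¹²(0,1)` to
`L²(0,1)`: `∫₀¹ |ũ(x−α) − ũ(x−β)|² dx ≤ C (β−α) ‖u‖²_{W¹²}`. -/
theorem stmt_4 :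
    ∃ C : ℝ, 0 < C ∧
      ∀ (α β : ℝ), 0 ≤ α → α ≤ β → β ≤ 1 →
        ∀ (u du : ℝ → ℂ),
          ContinuousOn u (Set.Icc (0:ℝ) 1) →
          ContinuousOn du (Set.Icc (0:ℝ) 1) →
          (∀ x ∈ Set.Icc (0:ℝ) 1, HasDerivWithinAt u (du x) (Set.Icc (0:ℝ) 1) x) →
          ∫ x in Set.Ioo (0:ℝ) 1, ‖ext01 u (x - α) - ext01 u (x - β)‖ ^ 2
            ≤ C * (β - α) *
              ((∫ t in Set.Ioo (0:ℝ) 1, ‖u t‖ ^ 2) + ∫ t in Set.Ioo (0:ℝ) 1, ‖du t‖ ^ 2) := by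
  refine ⟨2, two_pos, ?_⟩
  intro α β hα hαβ hβ u du hu hdu hderiv
  rcases eq_or_lt_of_le hαβ with rfl | hab
  · simp only [sub_self, norm_zero]
    simp only [ne_eq, OfNat.ofNat_ne_zero, not_false_eq_true, zero_pow, integral_zero, mul_zero,
      zero_mul]
    exact le_refl 0
  set A := ∫ t in Ioo (0:ℝ) 1, ‖u t‖ ^ 2 with hA_def
  set B := ∫ t in Ioo (0:ℝ) 1, ‖du t‖ ^ 2 with hB_def
  have hA0 : 0 ≤ A := setIntegral_nonneg measurableSet_Ioo (fun x _ => by positivity)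
  have hB0 : 0 ≤ B := setIntegral_nonneg measurableSet_Ioo (fun x _ => by positivity)
  have hsup : ∀ t ∈ Icc (0:ℝ) 1, ‖u t‖ ^ 2 ≤ 2 * A + B := aux_sup u du hu hdu hderiv
  have hM0 : 0 ≤ 2 * A + B := by linarith
  have hext_bd : ∀ y : ℝ, ‖ext01 u y‖ ^ 2 ≤ 2 * A + B := by
    intro y
    by_cases hy : y ∈ Ioo (0:ℝ) 1
    · rw [ext01, indicator_of_mem hy]
      exact hsup y (Ioo_subset_Icc_self hy)
    · rw [ext01, indicator_of_notMem hy]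
      simpa using hM0
  -- integrability of g
  set g : ℝ → ℝ := fun x => ‖ext01 u (x - α) - ext01 u (x - β)‖ ^ 2 with hg_def
  have hm : AEMeasurable (ext01 u) (volume : Measure ℝ) := by
    rw [ext01, aemeasurable_indicator_iff measurableSet_Ioo]
    exact (hu.mono Ioo_subset_Icc_self).aemeasurable measurableSet_Ioo
  have hmg : ∀ γ : ℝ, AEMeasurable (fun x => ext01 u (x - γ)) (volume : Measure ℝ) := fun γ =>
    hm.comp_quasiMeasurePreserving (measurePreserving_sub_right volume γ).quasiMeasurePreserving
  have hgm : AEMeasurable g (volume : Measure ℝ) :=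
    (((hmg α).sub (hmg β)).norm.pow_const 2)
  have hgint : IntegrableOn g (Icc 0 1) (volume : Measure ℝ) := by
    apply Integrable.mono' (g := fun _ => 4 * (2 * A + B))
    · exact integrableOn_const (by simp [Real.volume_Icc])
    · exact hgm.restrict.aestronglyMeasurable
    · refine Filter.Eventually.of_forall fun x => ?_
      have h1 := hext_bd (x - α)
      have h2 := hext_bd (x - β)
      have htri : ‖ext01 u (x - α) - ext01 u (x - β)‖ ≤ ‖ext01 u (x - α)‖ + ‖ext01 u (x - β)‖ :=
        norm_sub_le _ _
      have hsq : ‖ext01 u (x - α) - ext01 u (x - β)‖ ^ 2 ≤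
          (‖ext01 u (x - α)‖ + ‖ext01 u (x - β)‖) ^ 2 :=
        pow_le_pow_left₀ (norm_nonneg _) htri 2
      rw [hg_def, Real.norm_eq_abs, abs_of_nonneg (by positivity)]
      simp only
      nlinarith [sq_nonneg (‖ext01 u (x - α)‖ - ‖ext01 u (x - β)‖)]
  -- split the integral
  have e1 : ∫ x in Ioo (0:ℝ) 1, g x = ∫ x in Ioc (0:ℝ) 1, g x := integral_Ioc_eq_integral_Ioo.symm
  have hsub : ∀ {a b : ℝ}, 0 ≤ a → b ≤ 1 → Ioc a b ⊆ Icc 0 1 := fun ha hb x hx =>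
    ⟨le_trans ha hx.1.le, le_trans hx.2 hb⟩
  have i01 : IntegrableOn g (Ioc 0 α) volume := hgint.mono_set (hsub le_rfl (hαβ.trans hβ))
  have iαβ : IntegrableOn g (Ioc α β) volume := hgint.mono_set (hsub hα hβ)
  have iβ1 : IntegrableOn g (Ioc β 1) volume := hgint.mono_set (hsub (hα.trans hαβ) le_rfl)
  have i0β : IntegrableOn g (Ioc 0 β) volume := hgint.mono_set (hsub le_rfl hβ)
  have e2 : ∫ x in Ioc (0:ℝ) 1, g x =
      ((∫ x in Ioc (0:ℝ) α, g x) + ∫ x in Ioc α β, g x) + ∫ x in Ioc β 1, g x := by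
    rw [← Ioc_union_Ioc_eq_Ioc (hα.trans hαβ) hβ,
      setIntegral_union (Ioc_disjoint_Ioc_of_le le_rfl) measurableSet_Ioc i0β iβ1,
      ← Ioc_union_Ioc_eq_Ioc hα hαβ,
      setIntegral_union (Ioc_disjoint_Ioc_of_le le_rfl) measurableSet_Ioc i01 iαβ]
  -- piece 1 : zero
  have p1 : ∫ x in Ioc (0:ℝ) α, g x = 0 := by
    apply setIntegral_eq_zero_of_forall_eq_zero
    intro x hx
    have h1 : x - α ∉ Ioo (0:ℝ) 1 := by rintro ⟨h1', _⟩; linarith [hx.2]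
    have h2 : x - β ∉ Ioo (0:ℝ) 1 := by rintro ⟨h1', _⟩; linarith [hx.2]
    simp [hg_def, ext01, indicator_of_notMem h1, indicator_of_notMem h2]
  -- piece 2
  have p2 : ∫ x in Ioc α β, g x ≤ (β - α) * (2 * A + B) := by
    have hb : ∀ x ∈ Ioc α β, g x ≤ 2 * A + B := by
      intro x hx
      have h2 : x - β ∉ Ioo (0:ℝ) 1 := by rintro ⟨h1', _⟩; linarith [hx.2]
      have hgx : g x = ‖ext01 u (x - α)‖ ^ 2 := by
        simp [hg_def, ext01, indicator_of_notMem h2]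
      rw [hgx]; exact hext_bd _
    have h := setIntegral_mono_on iαβ
      (integrableOn_const (by simp [Real.volume_Ioc])) measurableSet_Ioc hb
    rwa [setIntegral_const, measureReal_def, Real.volume_Ioc, ENNReal.toReal_ofReal (by linarith), smul_eq_mul]
      at h
  -- piece 3
  have hIntdu2 : IntegrableOn (fun s => ‖du s‖ ^ 2) (Ioo 0 1) volume :=
    ((hdu.norm).pow 2).integrableOn_Icc.mono_set Ioo_subset_Icc_self
  have p3 : ∫ x in Ioc β 1, g x ≤ (β - α) * B := by
    rw [integral_Ioc_eq_integral_Ioo]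
    have hb : ∀ x ∈ Ioo β 1, g x ≤ (β - α) * B := by
      intro x hx
      set a := x - β with ha_def
      set b := x - α with hb_def
      have ha0 : 0 < a := by rw [ha_def]; linarith [hx.1]
      have hab' : a ≤ b := by rw [ha_def, hb_def]; linarith
      have hb1 : b < 1 := by rw [hb_def]; linarith [hx.2]
      have hbI : b ∈ Ioo (0:ℝ) 1 := ⟨lt_of_lt_of_le ha0 hab', hb1⟩
      have haI : a ∈ Ioo (0:ℝ) 1 := ⟨ha0, lt_of_le_of_lt hab' hb1⟩
      have hgx : g x = ‖u b - u a‖ ^ 2 := by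
        simp only [hg_def, ext01, ← ha_def, ← hb_def, indicator_of_mem hbI, indicator_of_mem haI]
      have hIccsub : Icc a b ⊆ Icc (0:ℝ) 1 := Icc_subset_Icc ha0.le hb1.le
      have key : ∫ y in a..b, du y = u b - u a := by
        apply intervalIntegral.integral_eq_sub_of_hasDeriv_right_of_le hab' (hu.mono hIccsub)
        · intro y hy
          have hyI : y ∈ Icc (0:ℝ) 1 := ⟨(ha0.trans hy.1).le, (hy.2.trans_le hb1.le).le⟩
          exact (hderiv y hyI).mono_of_mem_nhdsWithin
            (Icc_mem_nhdsGT_of_mem ⟨hyI.1, hy.2.trans hb1⟩)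
        · apply ContinuousOn.intervalIntegrable
          apply hdu.mono
          rw [uIcc_of_le hab']
          exact hIccsub
      set I := ∫ y in Ioc a b, ‖du y‖ with hI_def
      have hI0 : 0 ≤ I := setIntegral_nonneg measurableSet_Ioc (fun _ _ => norm_nonneg _)
      have hnorm : ‖u b - u a‖ ≤ I := by
        rw [← key]
        have h := intervalIntegral.norm_integral_le_integral_norm_uIoc
          (a := a) (b := b) (f := du) (μ := volume)
        rwa [uIoc_of_le hab'] at h
      have habsub : Ioc a b ⊆ Ioo (0:ℝ) 1 :=
        fun y hy => ⟨ha0.trans hy.1, lt_of_le_of_lt hy.2 hb1⟩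
      have hIduab : IntegrableOn (fun y => ‖du y‖) (Ioc a b) volume :=
        (hdu.norm).integrableOn_Icc.mono_set (Ioc_subset_Icc_self.trans hIccsub)
      have hIdu2ab : IntegrableOn (fun y => ‖du y‖ ^ 2) (Ioc a b) volume :=
        hIntdu2.mono_set habsub
      have hS : (∫ y in Ioc a b, ‖du y‖ ^ 2) ≤ B := by
        rw [hB_def]
        exact setIntegral_mono_set hIntdu2
          (Filter.Eventually.of_forall fun y => by positivity)
          (Filter.Eventually.of_forall fun y hy => habsub hy)
      have hvol : (volume (Ioc a b)).toReal = β - α := by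
        rw [Real.volume_Ioc, ENNReal.toReal_ofReal (by linarith)]
        rw [ha_def, hb_def]; ring
      have hlam : ∀ l : ℝ, 0 < l → 2 * I ≤ l * (β - α) + B / l := by
        intro l hl
        have hpt : ∀ y ∈ Ioc a b, 2 * ‖du y‖ ≤ l + ‖du y‖ ^ 2 / l := by
          intro y _
          have he : l + ‖du y‖ ^ 2 / l = (l ^ 2 + ‖du y‖ ^ 2) / l := by field_simp
          rw [he, le_div_iff₀ hl]
          nlinarith [sq_nonneg (l - ‖du y‖)]
        have hconst : IntegrableOn (fun _ : ℝ => l) (Ioc a b) volume :=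
          integrableOn_const (by simp [Real.volume_Ioc])
        have hmono := setIntegral_mono_on (hIduab.const_mul 2)
          (hconst.add (hIdu2ab.div_const l)) measurableSet_Ioc hpt
        rw [integral_const_mul] at hmono
        simp only [Pi.add_apply] at hmono
        have hre : (∫ y in Ioc a b, (l + ‖du y‖ ^ 2 / l)) =
            l * (β - α) + (∫ y in Ioc a b, ‖du y‖ ^ 2) / l := by
          rw [integral_add hconst (hIdu2ab.div_const l), setIntegral_const, measureReal_def, hvol, smul_eq_mul,
            integral_div]
          ring
        rw [hre] at hmono
        have hdiv : (∫ y in Ioc a b, ‖du y‖ ^ 2) / l ≤ B / l := by gcongr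
        calc 2 * I ≤ l * (β - α) + (∫ y in Ioc a b, ‖du y‖ ^ 2) / l := hmono
          _ ≤ l * (β - α) + B / l := by linarith
      have hI2 : I ^ 2 ≤ (β - α) * B := aux_cs hI0 (by linarith) hB0 hlam
      rw [hgx]
      calc ‖u b - u a‖ ^ 2 ≤ I ^ 2 := pow_le_pow_left₀ (norm_nonneg _) hnorm 2
        _ ≤ (β - α) * B := hI2
    have h := setIntegral_mono_on (iβ1.mono_set Ioo_subset_Ioc_self)
      (integrableOn_const (by simp [Real.volume_Ioo])) measurableSet_Ioo hb
    rw [setIntegral_const, smul_eq_mul, measureReal_def, Real.volume_Ioo,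
      ENNReal.toReal_ofReal (by linarith)] at h
    refine le_trans h ?_
    nlinarith [mul_nonneg (show (0:ℝ) ≤ β - α by linarith) hB0]
  calc ∫ x in Ioo (0:ℝ) 1, g x
      = ((∫ x in Ioc (0:ℝ) α, g x) + ∫ x in Ioc α β, g x) + ∫ x in Ioc β 1, g x := by
        rw [e1, e2]
    _ ≤ (0 + (β - α) * (2 * A + B)) + (β - α) * B := by
        rw [p1]
        exact add_le_add (add_le_add le_rfl p2) p3
    _ ≤ 2 * (β - α) * (A + B) := by nlinarith
end

section
/- Let α, β ∈ [0,1], b ≥ 0, and let z ∈ ℂ satisfy |Im z| ≤ b and Re z ≥ K·e^b + 1, where K = ‖V‖_{L∞(0,1)} + ‖Q‖_{L∞(0,1)}. Then there exists exactly one continuous function φ : [0,1] → ℂ satisfying the Volterra integral equation φ(x) = cos(zx) + z⁻¹·∫₀ˣ (B(α,β)φ)(t)·sin(z(x−t)) dt for all x ∈ [0,1]. -/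
open MeasureTheory Set

lemma norm_sin_le' (w : ℂ) : ‖Complex.sin w‖ ≤ Real.exp |w.im| := by
  have h : Complex.sin w = (Complex.exp (-w * Complex.I) - Complex.exp (w * Complex.I)) * Complex.I / 2 := rfl
  rw [h]
  have h1 : ‖Complex.exp (-w * Complex.I)‖ = Real.exp w.im := by
    rw [Complex.norm_exp]; congr 1; simp [Complex.mul_I_re]
  have h2 : ‖Complex.exp (w * Complex.I)‖ = Real.exp (-w.im) := by
    rw [Complex.norm_exp]; congr 1; simp [Complex.mul_I_re]
  calc ‖(Complex.exp (-w * Complex.I) - Complex.exp (w * Complex.I)) * Complex.I / 2‖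
      = ‖Complex.exp (-w * Complex.I) - Complex.exp (w * Complex.I)‖ / 2 := by
        rw [norm_div, norm_mul]; simp
    _ ≤ (Real.exp w.im + Real.exp (-w.im)) / 2 := by
        rw [← h1, ← h2]; gcongr; exact norm_sub_le _ _
    _ ≤ (Real.exp |w.im| + Real.exp |w.im|) / 2 := by
        gcongr <;> first | exact le_abs_self _ | exact neg_le_abs _
    _ = Real.exp |w.im| := by ring

lemma ae_norm_le' {f : ℝ → ℂ} {μ : Measure ℝ} (hf : eLpNorm f ⊤ μ ≠ ⊤) :
    ∀ᵐ x ∂μ, ‖f x‖ ≤ (eLpNorm f ⊤ μ).toReal := by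
  rw [eLpNorm_exponent_top] at hf ⊢
  filter_upwards [MeasureTheory.ae_le_eLpNormEssSup (f := f) (μ := μ)] with x hx
  have := ENNReal.toReal_mono hf hx
  simpa using this

variable {V Q : ℝ → ℂ} {α β : ℝ} {ψ : ℝ → ℂ} {M : ℝ}

lemma ext01_norm_le (hM : 0 ≤ M) (hψ : ∀ t ∈ Ioo (0:ℝ) 1, ‖ψ t‖ ≤ M) (s : ℝ) :
    ‖ext01 ψ s‖ ≤ M := by
  by_cases h : s ∈ Ioo (0:ℝ) 1
  · rw [ext01, indicator_of_mem h]; exact hψ s h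
  · rw [ext01, indicator_of_notMem h]; simpa using hM

lemma bop_meas (hV : Measurable V) (hQ : Measurable Q) (hψ : Measurable ψ) :
    Measurable (Bop V Q α β ψ) := by
  have h : Measurable (ext01 ψ) := hψ.indicator measurableSet_Ioo
  exact (hV.mul (h.comp (measurable_id.add_const α))).add
    (hQ.mul (h.comp (measurable_id.sub_const β)))

lemma bop_ae_bound (hVb : eLpNorm V ⊤ (volume.restrict (Set.Ioo (0:ℝ) 1)) ≠ ⊤)
    (hQb : eLpNorm Q ⊤ (volume.restrict (Set.Ioo (0:ℝ) 1)) ≠ ⊤)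
    (hM : 0 ≤ M) (hψ : ∀ t ∈ Ioo (0:ℝ) 1, ‖ψ t‖ ≤ M) :
    ∀ᵐ t ∂(volume.restrict (Ioo (0:ℝ) 1)), ‖Bop V Q α β ψ t‖ ≤ Knorm V Q * M := by
  filter_upwards [ae_norm_le' hVb, ae_norm_le' hQb] with t h1 h2
  calc ‖V t * ext01 ψ (t + α) + Q t * ext01 ψ (t - β)‖
      ≤ ‖V t‖ * ‖ext01 ψ (t + α)‖ + ‖Q t‖ * ‖ext01 ψ (t - β)‖ := by
        refine (norm_add_le _ _).trans ?_; rw [norm_mul, norm_mul]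
    _ ≤ (eLpNorm V ⊤ (volume.restrict (Set.Ioo (0:ℝ) 1))).toReal * M
        + (eLpNorm Q ⊤ (volume.restrict (Set.Ioo (0:ℝ) 1))).toReal * M := by
        gcongr <;> exact ext01_norm_le hM hψ _
    _ = Knorm V Q * M := by rw [Knorm]; ring

lemma bop_integrableOn (hV : Measurable V) (hQ : Measurable Q)
    (hVb : eLpNorm V ⊤ (volume.restrict (Set.Ioo (0:ℝ) 1)) ≠ ⊤)
    (hQb : eLpNorm Q ⊤ (volume.restrict (Set.Ioo (0:ℝ) 1)) ≠ ⊤)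
    (hψ : Measurable ψ) (hM : 0 ≤ M) (hψM : ∀ t ∈ Ioo (0:ℝ) 1, ‖ψ t‖ ≤ M) :
    IntegrableOn (Bop V Q α β ψ) (Icc (0:ℝ) 1) volume := by
  have hfin : IsFiniteMeasure (volume.restrict (Ioo (0:ℝ) 1)) := by
    constructor
    rw [Measure.restrict_apply_univ, Real.volume_Ioo]
    exact ENNReal.ofReal_lt_top
  have h : IntegrableOn (Bop V Q α β ψ) (Ioo (0:ℝ) 1) volume := by
    exact (integrable_const (Knorm V Q * M)).mono'
      (bop_meas hV hQ hψ).aestronglyMeasurable (bop_ae_bound hVb hQb hM hψM)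
  unfold IntegrableOn at h ⊢
  rwa [← Measure.restrict_congr_set Ioo_ae_eq_Icc]

lemma bop_intervalIntegrable (hV : Measurable V) (hQ : Measurable Q)
    (hVb : eLpNorm V ⊤ (volume.restrict (Set.Ioo (0:ℝ) 1)) ≠ ⊤)
    (hQb : eLpNorm Q ⊤ (volume.restrict (Set.Ioo (0:ℝ) 1)) ≠ ⊤)
    (hψ : Measurable ψ) (hM : 0 ≤ M) (hψM : ∀ t ∈ Ioo (0:ℝ) 1, ‖ψ t‖ ≤ M)
    {x : ℝ} (hx : x ∈ Icc (0:ℝ) 1) :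
    IntervalIntegrable (Bop V Q α β ψ) volume 0 x := by
  rw [intervalIntegrable_iff_integrableOn_Ioc_of_le hx.1]
  exact (bop_integrableOn hV hQ hVb hQb hψ hM hψM).mono_set
    (Ioc_subset_Icc_self.trans (Icc_subset_Icc le_rfl hx.2))

noncomputable def Tmap (V Q : ℝ → ℂ) (α β : ℝ) (z : ℂ) (ψ : ℝ → ℂ) : ℝ → ℂ :=
  fun x => Complex.cos (z * x) + z⁻¹ *
    (Complex.sin (z * x) * (∫ t in (0:ℝ)..x, Bop V Q α β ψ t * Complex.cos (z * t))
     - Complex.cos (z * x) * (∫ t in (0:ℝ)..x, Bop V Q α β ψ t * Complex.sin (z * t)))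

lemma tmap_eq {z : ℂ} {x : ℝ} (hInt : IntervalIntegrable (Bop V Q α β ψ) volume 0 x) :
    Tmap V Q α β z ψ x = Complex.cos (z * x)
      + z⁻¹ * ∫ t in (0:ℝ)..x, Bop V Q α β ψ t * Complex.sin (z * (↑x - ↑t)) := by
  have h1 : IntervalIntegrable (fun t => Bop V Q α β ψ t * Complex.cos (z * t)) volume 0 x :=
    hInt.mul_continuousOn (Continuous.continuousOn (by fun_prop))
  have h2 : IntervalIntegrable (fun t => Bop V Q α β ψ t * Complex.sin (z * t)) volume 0 x :=
    hInt.mul_continuousOn (Continuous.continuousOn (by fun_prop))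
  have key : ∫ t in (0:ℝ)..x, Bop V Q α β ψ t * Complex.sin (z * (↑x - ↑t))
      = Complex.sin (z * x) * (∫ t in (0:ℝ)..x, Bop V Q α β ψ t * Complex.cos (z * t))
        - Complex.cos (z * x) * (∫ t in (0:ℝ)..x, Bop V Q α β ψ t * Complex.sin (z * t)) := by
    rw [← intervalIntegral.integral_const_mul, ← intervalIntegral.integral_const_mul,
      ← intervalIntegral.integral_sub (h1.const_mul _) (h2.const_mul _)]
    apply intervalIntegral.integral_congr
    intro t _
    show Bop V Q α β ψ t * Complex.sin (z * (↑x - ↑t))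
      = Complex.sin (z * ↑x) * (Bop V Q α β ψ t * Complex.cos (z * ↑t))
        - Complex.cos (z * ↑x) * (Bop V Q α β ψ t * Complex.sin (z * ↑t))
    rw [show z * ((x:ℂ) - (t:ℂ)) = z * x - z * t by ring, Complex.sin_sub]; ring
  rw [Tmap, key]

lemma tmap_contOn (hV : Measurable V) (hQ : Measurable Q)
    (hVb : eLpNorm V ⊤ (volume.restrict (Set.Ioo (0:ℝ) 1)) ≠ ⊤)
    (hQb : eLpNorm Q ⊤ (volume.restrict (Set.Ioo (0:ℝ) 1)) ≠ ⊤)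
    (hψ : Measurable ψ) (hM : 0 ≤ M) (hψM : ∀ t ∈ Ioo (0:ℝ) 1, ‖ψ t‖ ≤ M) (z : ℂ) :
    ContinuousOn (Tmap V Q α β z ψ) (Icc (0:ℝ) 1) := by
  have hII : IntervalIntegrable (Bop V Q α β ψ) volume 0 1 :=
    bop_intervalIntegrable hV hQ hVb hQb hψ hM hψM (by norm_num)
  have h1 : IntervalIntegrable (fun t => Bop V Q α β ψ t * Complex.cos (z * t)) volume 0 1 :=
    hII.mul_continuousOn (Continuous.continuousOn (by fun_prop))
  have h2 : IntervalIntegrable (fun t => Bop V Q α β ψ t * Complex.sin (z * t)) volume 0 1 :=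
    hII.mul_continuousOn (Continuous.continuousOn (by fun_prop))
  have hu : uIcc (0:ℝ) 1 = Icc (0:ℝ) 1 := uIcc_of_le (by norm_num)
  have c1 : ContinuousOn (fun x => ∫ t in (0:ℝ)..x, Bop V Q α β ψ t * Complex.cos (z * t))
      (Icc (0:ℝ) 1) := by
    rw [← hu]; exact intervalIntegral.continuousOn_primitive_interval' h1 (by rw [hu]; norm_num)
  have c2 : ContinuousOn (fun x => ∫ t in (0:ℝ)..x, Bop V Q α β ψ t * Complex.sin (z * t))
      (Icc (0:ℝ) 1) := by
    rw [← hu]; exact intervalIntegral.continuousOn_primitive_interval' h2 (by rw [hu]; norm_num)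
  have hcos : Continuous fun x : ℝ => Complex.cos (z * x) := by fun_prop
  have hsin : Continuous fun x : ℝ => Complex.sin (z * x) := by fun_prop
  exact hcos.continuousOn.add (continuousOn_const.mul
    (((hsin.continuousOn.mul c1)).sub (hcos.continuousOn.mul c2)))

lemma integral_bound (hVb : eLpNorm V ⊤ (volume.restrict (Set.Ioo (0:ℝ) 1)) ≠ ⊤)
    (hQb : eLpNorm Q ⊤ (volume.restrict (Set.Ioo (0:ℝ) 1)) ≠ ⊤)
    (hV : Measurable V) (hQ : Measurable Q)
    (hψ : Measurable ψ) (hM : 0 ≤ M) (hψM : ∀ t ∈ Ioo (0:ℝ) 1, ‖ψ t‖ ≤ M)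
    {b : ℝ} (hb : 0 ≤ b) {z : ℂ} (hzim : |z.im| ≤ b)
    {x : ℝ} (hx : x ∈ Icc (0:ℝ) 1) :
    ‖∫ t in (0:ℝ)..x, Bop V Q α β ψ t * Complex.sin (z * (↑x - ↑t))‖
      ≤ Knorm V Q * M * Real.exp b := by
  have hK0 : 0 ≤ Knorm V Q := add_nonneg ENNReal.toReal_nonneg ENNReal.toReal_nonneg
  rw [intervalIntegral.integral_of_le hx.1]
  have hrw : volume.restrict (Ioc (0:ℝ) x) = volume.restrict (Ioo (0:ℝ) x) :=
    (Measure.restrict_congr_set Ioo_ae_eq_Ioc).symm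
  have haestep : ∀ᵐ t ∂(volume.restrict (Ioo (0:ℝ) x)),
      ‖Bop V Q α β ψ t * Complex.sin (z * (↑x - ↑t))‖ ≤ Knorm V Q * M * Real.exp b := by
    have hsub : Ioo (0:ℝ) x ⊆ Ioo (0:ℝ) 1 := Ioo_subset_Ioo le_rfl hx.2
    filter_upwards [ae_restrict_of_ae_restrict_of_subset hsub (bop_ae_bound hVb hQb hM hψM),
      ae_restrict_mem measurableSet_Ioo] with t h1 h2
    rw [norm_mul]
    have hs : ‖Complex.sin (z * (↑x - ↑t))‖ ≤ Real.exp b := by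
      refine (norm_sin_le' _).trans (Real.exp_le_exp.2 ?_)
      have him : (z * ((x:ℂ) - (t:ℂ))).im = z.im * (x - t) := by
        simp [Complex.mul_im, Complex.sub_im, Complex.ofReal_im, Complex.sub_re,
          Complex.ofReal_re]
      rw [him, abs_mul]
      have hxt : |x - t| ≤ 1 := by
        rw [abs_le]; constructor <;> [linarith [h2.1, hx.2, h2.2]; linarith [h2.1, hx.2, h2.2]]
      calc |z.im| * |x - t| ≤ b * 1 := mul_le_mul hzim hxt (abs_nonneg _) hb
        _ = b := mul_one b
    calc ‖Bop V Q α β ψ t‖ * ‖Complex.sin (z * (↑x - ↑t))‖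
        ≤ (Knorm V Q * M) * Real.exp b := by
          apply mul_le_mul h1 hs (norm_nonneg _) (mul_nonneg hK0 hM)
      _ = Knorm V Q * M * Real.exp b := by ring
  have hfin : volume (Ioc (0:ℝ) x) < ⊤ := by
    rw [Real.volume_Ioc]; exact ENNReal.ofReal_lt_top
  have := norm_setIntegral_le_of_norm_le_const_ae (μ := volume) (s := Ioc (0:ℝ) x) hfin
    (by rw [hrw]; exact haestep)
  refine this.trans ?_
  rw [measureReal_def, Real.volume_Ioc, ENNReal.toReal_ofReal (by linarith [hx.1])]
  calc Knorm V Q * M * Real.exp b * (x - 0) ≤ Knorm V Q * M * Real.exp b * 1 := by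
        apply mul_le_mul_of_nonneg_left (by linarith [hx.2]) (by positivity)
    _ = Knorm V Q * M * Real.exp b := mul_one _

lemma bop_sub (V Q : ℝ → ℂ) (α β : ℝ) (u v : ℝ → ℂ) (t : ℝ) :
    Bop V Q α β u t - Bop V Q α β v t = Bop V Q α β (u - v) t := by
  have h : ∀ s, ext01 (u - v) s = ext01 u s - ext01 v s := by
    intro s; by_cases hs : s ∈ Ioo (0:ℝ) 1 <;>
      simp [ext01, indicator_of_mem, indicator_of_notMem, hs]
  show (V t * ext01 u (t + α) + Q t * ext01 u (t - β))
      - (V t * ext01 v (t + α) + Q t * ext01 v (t - β))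
    = V t * ext01 (u - v) (t + α) + Q t * ext01 (u - v) (t - β)
  rw [h, h]; ring

lemma bop_congr (V Q : ℝ → ℂ) (α β : ℝ) {u v : ℝ → ℂ}
    (h : ∀ s ∈ Ioo (0:ℝ) 1, u s = v s) : Bop V Q α β u = Bop V Q α β v := by
  have h' : ext01 u = ext01 v := by
    funext s
    by_cases hs : s ∈ Ioo (0:ℝ) 1
    · rw [ext01, ext01, indicator_of_mem hs, indicator_of_mem hs, h s hs]
    · rw [ext01, ext01, indicator_of_notMem hs, indicator_of_notMem hs]
  funext t
  show V t * ext01 u (t + α) + Q t * ext01 u (t - β)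
    = V t * ext01 v (t + α) + Q t * ext01 v (t - β)
  rw [h']


/-- For `|Im z| ≤ b` and `Re z ≥ K·e^b + 1`, the Volterra integral equation
`φ(x) = cos(zx) + z⁻¹ ∫₀ˣ (B(α,β)φ)(t) sin(z(x−t)) dt` has exactly one
continuous solution on `[0,1]`. -/
theorem stmt_6 (V Q : ℝ → ℂ) (hVmeas : Measurable V) (hQmeas : Measurable Q)
    (hVb : eLpNorm V ⊤ (volume.restrict (Set.Ioo (0:ℝ) 1)) ≠ ⊤)
    (hQb : eLpNorm Q ⊤ (volume.restrict (Set.Ioo (0:ℝ) 1)) ≠ ⊤)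
    (α β : ℝ) (hα : α ∈ Set.Icc (0:ℝ) 1) (hβ : β ∈ Set.Icc (0:ℝ) 1)
    (b : ℝ) (hb : 0 ≤ b) (z : ℂ) (hzim : |z.im| ≤ b)
    (hzre : Knorm V Q * Real.exp b + 1 ≤ z.re) :
    (∃ φ : ℝ → ℂ, ContinuousOn φ (Set.Icc (0:ℝ) 1) ∧
      ∀ x ∈ Set.Icc (0:ℝ) 1,
        φ x = Complex.cos (z * ↑x)
          + z⁻¹ * ∫ t in (0:ℝ)..x, Bop V Q α β φ t * Complex.sin (z * (↑x - ↑t))) ∧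
    (∀ φ₁ φ₂ : ℝ → ℂ,
      ContinuousOn φ₁ (Set.Icc (0:ℝ) 1) →
      (∀ x ∈ Set.Icc (0:ℝ) 1,
        φ₁ x = Complex.cos (z * ↑x)
          + z⁻¹ * ∫ t in (0:ℝ)..x, Bop V Q α β φ₁ t * Complex.sin (z * (↑x - ↑t))) →
      ContinuousOn φ₂ (Set.Icc (0:ℝ) 1) →
      (∀ x ∈ Set.Icc (0:ℝ) 1,
        φ₂ x = Complex.cos (z * ↑x)
          + z⁻¹ * ∫ t in (0:ℝ)..x, Bop V Q α β φ₂ t * Complex.sin (z * (↑x - ↑t))) →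
      Set.EqOn φ₁ φ₂ (Set.Icc (0:ℝ) 1)) := by
  have hK0 : 0 ≤ Knorm V Q := add_nonneg ENNReal.toReal_nonneg ENNReal.toReal_nonneg
  have hexp : (0:ℝ) < Real.exp b := Real.exp_pos b
  have hden : (0:ℝ) < Knorm V Q * Real.exp b + 1 := by positivity
  have hzre0 : 0 < z.re := lt_of_lt_of_le hden hzre
  have hzinv : ‖z⁻¹‖ ≤ (Knorm V Q * Real.exp b + 1)⁻¹ := by
    rw [norm_inv]
    have h1 : Knorm V Q * Real.exp b + 1 ≤ ‖z‖ :=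
      hzre.trans (Complex.re_le_norm z)
    exact inv_anti₀ hden h1
  -- the lift
  set L : C(Icc (0:ℝ) 1, ℂ) → ℝ → ℂ :=
    fun φ => IccExtend (by norm_num : (0:ℝ) ≤ 1) φ with hL
  have hLcont : ∀ φ, Continuous (L φ) := fun φ => φ.continuous.Icc_extend'
  have hLval : ∀ φ (s : ℝ) (hs : s ∈ Icc (0:ℝ) 1), L φ s = φ ⟨s, hs⟩ :=
    fun φ s hs => IccExtend_of_mem _ _ hs
  have hLbd : ∀ (φ : C(Icc (0:ℝ) 1, ℂ)) (t : ℝ), t ∈ Ioo (0:ℝ) 1 → ‖L φ t‖ ≤ ‖φ‖ :=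
    fun φ t _ => φ.norm_coe_le_norm _
  -- the map T
  have key : ∀ φ : C(Icc (0:ℝ) 1, ℂ),
      Continuous fun x : Icc (0:ℝ) 1 => Tmap V Q α β z (L φ) x.1 := by
    intro φ
    exact (tmap_contOn hVmeas hQmeas hVb hQb (hLcont φ).measurable (norm_nonneg φ)
      (hLbd φ) z).restrict
  set T : C(Icc (0:ℝ) 1, ℂ) → C(Icc (0:ℝ) 1, ℂ) :=
    fun φ => ⟨fun x => Tmap V Q α β z (L φ) x.1, key φ⟩ with hT
  -- interval integrability for lifted maps
  have hII : ∀ (φ : C(Icc (0:ℝ) 1, ℂ)) (x : ℝ), x ∈ Icc (0:ℝ) 1 →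
      IntervalIntegrable (Bop V Q α β (L φ)) volume 0 x := fun φ x hx =>
    bop_intervalIntegrable hVmeas hQmeas hVb hQb (hLcont φ).measurable (norm_nonneg φ)
      (hLbd φ) hx
  -- contraction constant
  set c : NNReal := ⟨Knorm V Q * Real.exp b / (Knorm V Q * Real.exp b + 1), by positivity⟩
    with hc
  have hc1 : c < 1 := by
    rw [← NNReal.coe_lt_coe, NNReal.coe_one]
    exact (div_lt_one hden).2 (by linarith)
  -- the contraction estimate
  have hdist : ∀ φ₁ φ₂, dist (T φ₁) (T φ₂) ≤ c * dist φ₁ φ₂ := by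
    intro φ₁ φ₂
    have hcd : (0:ℝ) ≤ (c : ℝ) * dist φ₁ φ₂ := by positivity
    rw [ContinuousMap.dist_le hcd]
    intro p
    obtain ⟨x, hx⟩ := p
    have hg : Continuous fun t : ℝ => Complex.sin (z * (↑x - ↑t)) := by fun_prop
    have h1 := hII φ₁ x hx
    have h2 := hII φ₂ x hx
    have hm1 := h1.mul_continuousOn hg.continuousOn
    have hm2 := h2.mul_continuousOn hg.continuousOn
    have hdiff : Tmap V Q α β z (L φ₁) x - Tmap V Q α β z (L φ₂) x
        = z⁻¹ * ∫ t in (0:ℝ)..x,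
            Bop V Q α β (L φ₁ - L φ₂) t * Complex.sin (z * (↑x - ↑t)) := by
      rw [tmap_eq h1, tmap_eq h2]
      have : ∫ t in (0:ℝ)..x, Bop V Q α β (L φ₁ - L φ₂) t * Complex.sin (z * (↑x - ↑t))
          = (∫ t in (0:ℝ)..x, Bop V Q α β (L φ₁) t * Complex.sin (z * (↑x - ↑t)))
            - ∫ t in (0:ℝ)..x, Bop V Q α β (L φ₂) t * Complex.sin (z * (↑x - ↑t)) := by
        rw [← intervalIntegral.integral_sub hm1 hm2]
        apply intervalIntegral.integral_congr
        intro t _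
        show Bop V Q α β (L φ₁ - L φ₂) t * Complex.sin (z * (↑x - ↑t))
          = Bop V Q α β (L φ₁) t * Complex.sin (z * (↑x - ↑t))
            - Bop V Q α β (L φ₂) t * Complex.sin (z * (↑x - ↑t))
        rw [← bop_sub]; ring
      rw [this]; ring
    have hsubmeas : Measurable (L φ₁ - L φ₂) :=
      (hLcont φ₁).measurable.sub (hLcont φ₂).measurable
    have hsubbd : ∀ t ∈ Ioo (0:ℝ) 1, ‖(L φ₁ - L φ₂) t‖ ≤ dist φ₁ φ₂ := by
      intro t ht
      have ht' : t ∈ Icc (0:ℝ) 1 := Ioo_subset_Icc_self ht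
      have : (L φ₁ - L φ₂) t = φ₁ ⟨t, ht'⟩ - φ₂ ⟨t, ht'⟩ := by
        show L φ₁ t - L φ₂ t = _
        rw [hLval φ₁ t ht', hLval φ₂ t ht']
      rw [this, ← dist_eq_norm]
      exact ContinuousMap.dist_apply_le_dist _
    have hbound := integral_bound (α := α) (β := β) hVb hQb hVmeas hQmeas hsubmeas dist_nonneg hsubbd hb hzim hx
    calc dist (T φ₁ ⟨x, hx⟩) (T φ₂ ⟨x, hx⟩)
        = ‖Tmap V Q α β z (L φ₁) x - Tmap V Q α β z (L φ₂) x‖ := by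
          rw [dist_eq_norm]; rfl
      _ = ‖z⁻¹‖ * ‖∫ t in (0:ℝ)..x,
            Bop V Q α β (L φ₁ - L φ₂) t * Complex.sin (z * (↑x - ↑t))‖ := by
          rw [hdiff, norm_mul]
      _ ≤ (Knorm V Q * Real.exp b + 1)⁻¹ * (Knorm V Q * dist φ₁ φ₂ * Real.exp b) :=
          mul_le_mul hzinv hbound (norm_nonneg _) (by positivity)
      _ = (c : ℝ) * dist φ₁ φ₂ := by
          show _ = Knorm V Q * Real.exp b / (Knorm V Q * Real.exp b + 1) * dist φ₁ φ₂
          rw [div_eq_mul_inv]; ring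
  have hcontr : ContractingWith c T := ⟨hc1, LipschitzWith.of_dist_le_mul hdist⟩
  haveI : Nonempty C(Icc (0:ℝ) 1, ℂ) := ⟨ContinuousMap.const _ 0⟩
  set φ₀ : C(Icc (0:ℝ) 1, ℂ) := ContractingWith.fixedPoint T hcontr with hφ₀
  have hfix : T φ₀ = φ₀ := hcontr.fixedPoint_isFixedPt
  -- the solution-iff-fixed-point principle
  have hsol : ∀ φ : C(Icc (0:ℝ) 1, ℂ), ∀ x (hx : x ∈ Icc (0:ℝ) 1),
      (T φ) ⟨x, hx⟩ = Complex.cos (z * ↑x)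
        + z⁻¹ * ∫ t in (0:ℝ)..x, Bop V Q α β (L φ) t * Complex.sin (z * (↑x - ↑t)) := by
    intro φ x hx
    exact tmap_eq (hII φ x hx)
  constructor
  · -- existence
    refine ⟨L φ₀, (hLcont φ₀).continuousOn, ?_⟩
    intro x hx
    have h1 : L φ₀ x = φ₀ ⟨x, hx⟩ := hLval φ₀ x hx
    have h2 : φ₀ ⟨x, hx⟩ = (T φ₀) ⟨x, hx⟩ := by rw [hfix]
    rw [h1, h2, hsol φ₀ x hx]
  · -- uniqueness
    intro φ₁ φ₂ hc₁ he₁ hc₂ he₂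
    have mk : ∀ (φ : ℝ → ℂ), ContinuousOn φ (Icc (0:ℝ) 1) →
        (∀ x ∈ Set.Icc (0:ℝ) 1,
          φ x = Complex.cos (z * ↑x)
            + z⁻¹ * ∫ t in (0:ℝ)..x, Bop V Q α β φ t * Complex.sin (z * (↑x - ↑t))) →
        ∃ ψ : C(Icc (0:ℝ) 1, ℂ), (∀ x (hx : x ∈ Icc (0:ℝ) 1), ψ ⟨x, hx⟩ = φ x) ∧
          T ψ = ψ := by
      intro φ hcφ heφ
      refine ⟨⟨fun p => φ p.1, hcφ.restrict⟩, fun x hx => rfl, ?_⟩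
      ext p
      obtain ⟨x, hx⟩ := p
      have hBeq : Bop V Q α β (L ⟨fun p => φ p.1, hcφ.restrict⟩) = Bop V Q α β φ := by
        apply bop_congr
        intro s hs
        exact hLval _ s (Ioo_subset_Icc_self hs)
      rw [hsol _ x hx, hBeq, ← heφ x hx]; rfl
    obtain ⟨ψ₁, hψ₁v, hψ₁f⟩ := mk φ₁ hc₁ he₁
    obtain ⟨ψ₂, hψ₂v, hψ₂f⟩ := mk φ₂ hc₂ he₂
    have h12 : ψ₁ = ψ₂ := by
      rw [hcontr.fixedPoint_unique hψ₁f, hcontr.fixedPoint_unique hψ₂f]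
    intro x hx
    rw [← hψ₁v x hx, ← hψ₂v x hx, h12]
end

section
/- Let α, β ∈ [0,1] and z ∈ ℂ with z ≠ 0. If φ : [0,1] → ℂ is continuous and satisfies the Volterra integral equation φ(x) = cos(zx) + z⁻¹·∫₀ˣ (B(α,β)φ)(t)·sin(z(x−t)) dt for all x ∈ [0,1], then φ is differentiable on [0,1] with φ′(x) = −z·sin(zx) + ∫₀ˣ (B(α,β)φ)(t)·cos(z(x−t)) dt for all x ∈ [0,1]; in particular φ(0) = 1 and φ′(0) = 0. -/
open MeasureTheory Set

open Asymptotics Filter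

lemma sin_small {w : ℂ} (hw : ‖w‖ ≤ 1) :
    ‖Complex.sin w‖ ≤ 2 * ‖w‖ := by
  have h1 : ‖w * Complex.I‖ ≤ 1 := by simpa using hw
  have h2 : ‖-w * Complex.I‖ ≤ 1 := by simpa using hw
  have e1 := Complex.norm_exp_sub_one_le h1
  have e2 := Complex.norm_exp_sub_one_le h2
  have : Complex.sin w = ((Complex.exp (-w * Complex.I) - 1) - (Complex.exp (w * Complex.I) - 1)) * Complex.I / 2 := by
    rw [Complex.sin]; ring
  rw [this]
  rw [norm_div, norm_mul]
  simp only [Complex.norm_I, Complex.norm_two, mul_one]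
  calc ‖(Complex.exp (-w * Complex.I) - 1) - (Complex.exp (w * Complex.I) - 1)‖ / 2
      ≤ (‖Complex.exp (-w * Complex.I) - 1‖ + ‖Complex.exp (w * Complex.I) - 1‖) / 2 := by
        gcongr; exact (norm_sub_le _ _)
    _ ≤ (2 * ‖w‖ + 2 * ‖w‖) / 2 := by
        gcongr
        · simpa using e2
        · simpa using e1
    _ = 2 * ‖w‖ := by ring


lemma ext01_meas {u : ℝ → ℂ} (hu : ContinuousOn u (Set.Icc 0 1)) :
    AEMeasurable (ext01 u) volume := by
  rw [ext01, aemeasurable_indicator_iff measurableSet_Ioo]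
  exact (hu.mono Ioo_subset_Icc_self).aemeasurable measurableSet_Ioo

lemma Bop_meas {V Q u : ℝ → ℂ} (hV : Measurable V) (hQ : Measurable Q)
    (hu : ContinuousOn u (Set.Icc 0 1)) (α β : ℝ) :
    AEStronglyMeasurable (Bop V Q α β u) volume := by
  have h1 : AEMeasurable (fun x => ext01 u (x + α)) volume :=
    (ext01_meas hu).comp_quasiMeasurePreserving
      (measurePreserving_add_right volume α).quasiMeasurePreserving
  have h2 : AEMeasurable (fun x => ext01 u (x - β)) volume :=
    (ext01_meas hu).comp_quasiMeasurePreserving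
      (measurePreserving_sub_right volume β).quasiMeasurePreserving
  exact ((hV.aemeasurable.mul h1).add (hQ.aemeasurable.mul h2)).aestronglyMeasurable

lemma ext01_bdd {u : ℝ → ℂ} {M : ℝ} (hM0 : 0 ≤ M) (hM : ∀ y ∈ Set.Icc (0:ℝ) 1, ‖u y‖ ≤ M) :
    ∀ y, ‖ext01 u y‖ ≤ M := by
  intro y
  rw [ext01]
  by_cases hy : y ∈ Set.Ioo (0:ℝ) 1
  · rw [Set.indicator_of_mem hy]; exact hM y (Ioo_subset_Icc_self hy)
  · rw [Set.indicator_of_notMem hy]; simpa using hM0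

lemma ae_norm_le {f : ℝ → ℂ} (hfb : eLpNorm f ⊤ (volume.restrict (Set.Ioo (0:ℝ) 1)) ≠ ⊤) :
    ∀ᵐ x ∂(volume.restrict (Set.Ioc (0:ℝ) 1)),
      ‖f x‖ ≤ (eLpNorm f ⊤ (volume.restrict (Set.Ioo (0:ℝ) 1))).toReal := by
  have hre : volume.restrict (Set.Ioo (0:ℝ) 1) = volume.restrict (Set.Ioc (0:ℝ) 1) :=
    Measure.restrict_congr_set Ioo_ae_eq_Ioc
  rw [← hre]
  have hfb' : eLpNormEssSup f (volume.restrict (Set.Ioo (0:ℝ) 1)) ≠ ⊤ := by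
    rwa [eLpNorm_exponent_top] at hfb
  filter_upwards [enorm_ae_le_eLpNormEssSup f (volume.restrict (Set.Ioo (0:ℝ) 1))] with x hx
  have h2 := ENNReal.toReal_mono hfb' hx
  rw [eLpNorm_exponent_top]
  simpa using h2

lemma uIoc_sub {a b : ℝ} (ha : a ∈ Set.Icc (0:ℝ) 1) (hb : b ∈ Set.Icc (0:ℝ) 1) :
    Set.uIoc a b ⊆ Set.Ioc (0:ℝ) 1 := by
  rw [Set.uIoc]; exact Set.Ioc_subset_Ioc (le_min ha.1 hb.1) (max_le ha.2 hb.2)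

lemma aux_int {B : ℝ → ℂ} (hBm : AEStronglyMeasurable B volume) {C : ℝ}
    (hC : ∀ᵐ t ∂volume, t ∈ Set.Ioc (0:ℝ) 1 → ‖B t‖ ≤ C)
    {ψ : ℝ → ℂ} (hψ : Continuous ψ) {D : ℝ} (hD : ∀ t ∈ Set.Ioc (0:ℝ) 1, ‖ψ t‖ ≤ D)
    {a b : ℝ} (ha : a ∈ Set.Icc (0:ℝ) 1) (hb : b ∈ Set.Icc (0:ℝ) 1) :
    IntervalIntegrable (fun t => B t * ψ t) volume a b := by
  rw [intervalIntegrable_iff]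
  haveI : IsFiniteMeasure (volume.restrict (Set.uIoc a b)) := by
    constructor
    rw [Measure.restrict_apply_univ]
    exact lt_of_le_of_lt (measure_mono (uIoc_sub ha hb)) (by simp)
  apply Integrable.mono' (integrable_const (C * D))
  · exact (hBm.mul hψ.aestronglyMeasurable).restrict
  · have h1 : ∀ᵐ t ∂volume.restrict (Set.uIoc a b), t ∈ Set.Ioc (0:ℝ) 1 → ‖B t‖ ≤ C :=
      ae_restrict_of_ae hC
    filter_upwards [h1, ae_restrict_mem measurableSet_uIoc] with t h1' h2
    have ht : t ∈ Set.Ioc (0:ℝ) 1 := uIoc_sub ha hb h2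
    rw [norm_mul]
    exact mul_le_mul (h1' ht) (hD t ht) (norm_nonneg _) (le_trans (norm_nonneg _) (h1' ht))

lemma prim_bound {B : ℝ → ℂ} {C : ℝ}
    (hC : ∀ᵐ t ∂volume, t ∈ Set.Ioc (0:ℝ) 1 → ‖B t‖ ≤ C)
    {ψ : ℝ → ℂ} {D : ℝ} (hD : ∀ t ∈ Set.Ioc (0:ℝ) 1, ‖ψ t‖ ≤ D)
    {a b : ℝ} (ha : a ∈ Set.Icc (0:ℝ) 1) (hb : b ∈ Set.Icc (0:ℝ) 1) :
    ‖∫ t in a..b, B t * ψ t‖ ≤ (C * D) * |b - a| := by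
  apply intervalIntegral.norm_integral_le_of_norm_le_const_ae
  filter_upwards [hC] with t h1 h2
  have ht : t ∈ Set.Ioc (0:ℝ) 1 := uIoc_sub ha hb h2
  rw [norm_mul]
  exact mul_le_mul (h1 ht) (hD t ht) (norm_nonneg _) (le_trans (norm_nonneg _) (h1 ht))
section
variable {B : ℝ → ℂ} {C : ℝ} (z : ℂ)

lemma abs_sub_of_uIoc {x y t : ℝ} (ht : t ∈ Set.uIoc x y) : |x - t| ≤ |y - x| := by
  rcases le_total x y with h | h
  · rw [Set.uIoc_of_le h] at ht
    rw [abs_of_nonpos (by linarith [ht.1.le]), abs_of_nonneg (by linarith)]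
    linarith [ht.2]
  · rw [Set.uIoc_of_ge h] at ht
    rw [abs_of_nonneg (by linarith [ht.2]), abs_of_nonpos (by linarith)]
    linarith [ht.1.le]

lemma hasDerivAt_snz (x : ℝ) :
    HasDerivAt (fun y : ℝ => Complex.sin (z * ↑y)) (Complex.cos (z * ↑x) * z) x := by
  have h0 : HasDerivAt (fun w : ℂ => z * w) z ↑x := by
    simpa using (hasDerivAt_id ((x : ℂ))).const_mul z
  have h1 := (Complex.hasDerivAt_sin (z * ↑x)).comp (↑x : ℂ) h0
  exact h1.comp_ofReal

lemma hasDerivAt_csz (x : ℝ) :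
    HasDerivAt (fun y : ℝ => Complex.cos (z * ↑y)) (-Complex.sin (z * ↑x) * z) x := by
  have h0 : HasDerivAt (fun w : ℂ => z * w) z ↑x := by
    simpa using (hasDerivAt_id ((x : ℂ))).const_mul z
  have h1 := (Complex.hasDerivAt_cos (z * ↑x)).comp (↑x : ℂ) h0
  exact h1.comp_ofReal
end

lemma keyH {B : ℝ → ℂ} (hBm : AEStronglyMeasurable B volume) {C : ℝ} (hC0 : 0 ≤ C)
    (hC : ∀ᵐ t ∂volume, t ∈ Set.Ioc (0:ℝ) 1 → ‖B t‖ ≤ C) (z : ℂ) {x : ℝ}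
    (hx : x ∈ Set.Icc (0:ℝ) 1) :
    HasDerivWithinAt
      (fun y : ℝ => Complex.sin (z*↑y) * (∫ t in (0:ℝ)..y, B t * Complex.cos (z*↑t))
        - Complex.cos (z*↑y) * (∫ t in (0:ℝ)..y, B t * Complex.sin (z*↑t)))
      (Complex.cos (z*↑x) * z * (∫ t in (0:ℝ)..x, B t * Complex.cos (z*↑t))
        + Complex.sin (z*↑x) * z * (∫ t in (0:ℝ)..x, B t * Complex.sin (z*↑t)))
      (Set.Icc (0:ℝ) 1) x := by
  have h01 : (0:ℝ) ∈ Set.Icc (0:ℝ) 1 := by constructor <;> norm_num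
  -- continuity and bounds for cos(z t), sin(z t)
  have hcc : Continuous fun t : ℝ => Complex.cos (z * ↑t) :=
    Complex.continuous_cos.comp (continuous_const.mul Complex.continuous_ofReal)
  have hcs : Continuous fun t : ℝ => Complex.sin (z * ↑t) :=
    Complex.continuous_sin.comp (continuous_const.mul Complex.continuous_ofReal)
  obtain ⟨Dc, hDc⟩ := (isCompact_Icc (a := (0:ℝ)) (b := 1)).exists_bound_of_continuousOn
    hcc.continuousOn
  obtain ⟨Ds, hDs⟩ := (isCompact_Icc (a := (0:ℝ)) (b := 1)).exists_bound_of_continuousOn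
    hcs.continuousOn
  have hDc' : ∀ t ∈ Set.Ioc (0:ℝ) 1, ‖Complex.cos (z * ↑t)‖ ≤ Dc :=
    fun t ht => hDc t (Set.Ioc_subset_Icc_self ht)
  have hDs' : ∀ t ∈ Set.Ioc (0:ℝ) 1, ‖Complex.sin (z * ↑t)‖ ≤ Ds :=
    fun t ht => hDs t (Set.Ioc_subset_Icc_self ht)
  have hDc0 : 0 ≤ Dc := le_trans (norm_nonneg _) (hDc 0 h01)
  have hDs0 : 0 ≤ Ds := le_trans (norm_nonneg _) (hDs 0 h01)
  set s : Set ℝ := Set.Icc 0 1 with hs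
  set l : Filter ℝ := nhdsWithin x s with hl
  set F : ℝ → ℂ := fun y => ∫ t in (0:ℝ)..y, B t * Complex.cos (z*↑t) with hF
  set G : ℝ → ℂ := fun y => ∫ t in (0:ℝ)..y, B t * Complex.sin (z*↑t) with hG
  set sn : ℝ → ℂ := fun y => Complex.sin (z*↑y) with hsn
  set cs : ℝ → ℂ := fun y => Complex.cos (z*↑y) with hcsdef
  set c₁ : ℂ := Complex.cos (z*↑x) * z with hc₁
  set c₂ : ℂ := -Complex.sin (z*↑x) * z with hc₂
  -- integrability
  have hIc : ∀ a ∈ s, ∀ b ∈ s, IntervalIntegrable (fun t => B t * Complex.cos (z*↑t)) volume a b :=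
    fun a ha b hb => aux_int hBm hC hcc hDc' ha hb
  have hIs : ∀ a ∈ s, ∀ b ∈ s, IntervalIntegrable (fun t => B t * Complex.sin (z*↑t)) volume a b :=
    fun a ha b hb => aux_int hBm hC hcs hDs' ha hb
  -- difference representations
  have hFd : ∀ a ∈ s, ∀ b ∈ s, F b - F a = ∫ t in a..b, B t * Complex.cos (z*↑t) := by
    intro a ha b hb
    exact intervalIntegral.integral_interval_sub_left (hIc 0 h01 b hb) (hIc 0 h01 a ha)
  have hGd : ∀ a ∈ s, ∀ b ∈ s, G b - G a = ∫ t in a..b, B t * Complex.sin (z*↑t) := by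
    intro a ha b hb
    exact intervalIntegral.integral_interval_sub_left (hIs 0 h01 b hb) (hIs 0 h01 a ha)
  -- Lipschitz bounds
  have hFlip : ∀ a ∈ s, ∀ b ∈ s, ‖F b - F a‖ ≤ (C * Dc) * |b - a| := by
    intro a ha b hb; rw [hFd a ha b hb]; exact prim_bound hC hDc' ha hb
  have hGlip : ∀ a ∈ s, ∀ b ∈ s, ‖G b - G a‖ ≤ (C * Ds) * |b - a| := by
    intro a ha b hb; rw [hGd a ha b hb]; exact prim_bound hC hDs' ha hb
  have hF0 : F 0 = 0 := by simp [hF]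
  have hG0 : G 0 = 0 := by simp [hG]
  have hFbd : ∀ y ∈ s, ‖F y‖ ≤ C * Dc := by
    intro y hy
    have := hFlip 0 h01 y hy
    rw [hF0, sub_zero, sub_zero] at this
    refine this.trans ?_
    have : |y| ≤ 1 := abs_le.2 ⟨by linarith [hy.1], hy.2⟩
    calc C * Dc * |y| ≤ C * Dc * 1 := by
          apply mul_le_mul_of_nonneg_left this (by positivity)
      _ = C * Dc := mul_one _
  have hGbd : ∀ y ∈ s, ‖G y‖ ≤ C * Ds := by
    intro y hy
    have := hGlip 0 h01 y hy
    rw [hG0, sub_zero, sub_zero] at this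
    refine this.trans ?_
    have : |y| ≤ 1 := abs_le.2 ⟨by linarith [hy.1], hy.2⟩
    calc C * Ds * |y| ≤ C * Ds * 1 := by
          apply mul_le_mul_of_nonneg_left this (by positivity)
      _ = C * Ds := mul_one _
  -- little-o machinery
  rw [hasDerivWithinAt_iff_isLittleO]
  have hev : ∀ᶠ y in l, y ∈ s := self_mem_nhdsWithin
  have hsq : (fun y : ℝ => (y - x) * (y - x)) =o[l] fun y => y - x := by
    have h0 : (fun y : ℝ => y - x) =o[l] (fun _ => (1:ℝ)) := by
      rw [isLittleO_one_iff]
      have : Filter.Tendsto (fun y : ℝ => y - x) (nhds x) (nhds (x - x)) :=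
        (continuous_id.sub continuous_const).tendsto x
      simpa using this.mono_left nhdsWithin_le_nhds
    have := (isBigO_refl (fun y : ℝ => y - x) l).mul_isLittleO h0
    simpa using this
  -- T1
  have hsno : (fun y => sn y - sn x - (y - x) • c₁) =o[l] fun y => y - x :=
    hasDerivWithinAt_iff_isLittleO.1 ((hasDerivAt_snz z x).hasDerivWithinAt)
  have hcso : (fun y => cs y - cs x - (y - x) • c₂) =o[l] fun y => y - x :=
    hasDerivWithinAt_iff_isLittleO.1 ((hasDerivAt_csz z x).hasDerivWithinAt)
  have hFbig : F =O[l] (fun _ => (1:ℝ)) := by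
    apply IsBigO.of_bound (C * Dc)
    filter_upwards [hev] with y hy
    simpa using hFbd y hy
  have hGbig : G =O[l] (fun _ => (1:ℝ)) := by
    apply IsBigO.of_bound (C * Ds)
    filter_upwards [hev] with y hy
    simpa using hGbd y hy
  have T1o : (fun y => (sn y - sn x - (y - x) • c₁) * F y) =o[l] fun y => y - x := by
    have := hsno.mul_isBigO hFbig
    simpa using this
  have T3o : (fun y => -((cs y - cs x - (y - x) • c₂) * G y)) =o[l] fun y => y - x := by
    have := (hcso.mul_isBigO hGbig).neg_left
    simpa using this
  have T2o : (fun y => ((y - x) • c₁) * (F y - F x)) =o[l] fun y => y - x := by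
    refine IsBigO.trans_isLittleO ?_ hsq
    apply IsBigO.of_bound (‖c₁‖ * (C * Dc))
    filter_upwards [hev] with y hy
    rw [norm_mul, norm_smul, Real.norm_eq_abs, Real.norm_eq_abs, abs_mul]
    calc |y - x| * ‖c₁‖ * ‖F y - F x‖ ≤ |y - x| * ‖c₁‖ * ((C * Dc) * |y - x|) := by
          apply mul_le_mul_of_nonneg_left (hFlip x hx y hy) (by positivity)
      _ = ‖c₁‖ * (C * Dc) * (|y - x| * |y - x|) := by ring
  have T4o : (fun y => -(((y - x) • c₂) * (G y - G x))) =o[l] fun y => y - x := by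
    refine IsBigO.trans_isLittleO ?_ hsq
    apply IsBigO.of_bound (‖c₂‖ * (C * Ds))
    filter_upwards [hev] with y hy
    rw [norm_neg, norm_mul, norm_smul, Real.norm_eq_abs, Real.norm_eq_abs, abs_mul]
    calc |y - x| * ‖c₂‖ * ‖G y - G x‖ ≤ |y - x| * ‖c₂‖ * ((C * Ds) * |y - x|) := by
          apply mul_le_mul_of_nonneg_left (hGlip x hx y hy) (by positivity)
      _ = ‖c₂‖ * (C * Ds) * (|y - x| * |y - x|) := by ring
  -- T5
  set δ : ℝ := min 1 (1/(‖z‖+1)) with hδdef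
  have hδpos : 0 < δ := by
    apply lt_min one_pos
    positivity
  have hδev : ∀ᶠ y in l, |y - x| ≤ δ := by
    apply Filter.Eventually.filter_mono nhdsWithin_le_nhds
    have := Metric.ball_mem_nhds x hδpos
    filter_upwards [this] with y hy
    rw [Metric.mem_ball, Real.dist_eq] at hy
    exact hy.le
  have T5o : (fun y => sn x * (F y - F x) - cs x * (G y - G x)) =o[l] fun y => y - x := by
    refine IsBigO.trans_isLittleO ?_ hsq
    apply IsBigO.of_bound (C * (2 * ‖z‖))
    filter_upwards [hev, hδev] with y hy hyδ
    -- representation as a single integral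
    have hrep : sn x * (F y - F x) - cs x * (G y - G x)
        = ∫ t in x..y, B t * Complex.sin (z * (↑x - ↑t)) := by
      rw [hFd x hx y hy, hGd x hx y hy]
      rw [← intervalIntegral.integral_const_mul, ← intervalIntegral.integral_const_mul,
        ← intervalIntegral.integral_sub
          ((hIc x hx y hy).const_mul (sn x)) ((hIs x hx y hy).const_mul (cs x))]
      apply intervalIntegral.integral_congr
      intro t _
      simp only [hsn, hcsdef]
      rw [mul_sub, Complex.sin_sub]
      ring
    rw [hrep]
    have hbound : ∀ᵐ t ∂volume, t ∈ Set.uIoc x y →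
        ‖B t * Complex.sin (z * (↑x - ↑t))‖ ≤ C * (2 * ‖z‖ * |y - x|) := by
      filter_upwards [hC] with t h1 h2
      have ht01 : t ∈ Set.Ioc (0:ℝ) 1 := uIoc_sub hx hy h2
      have htd : |x - t| ≤ |y - x| := abs_sub_of_uIoc h2
      have habs : ‖z * (↑x - ↑t)‖ = ‖z‖ * |x - t| := by
        rw [norm_mul]
        congr 1
        rw [show ((x:ℂ) - ↑t) = ((x - t : ℝ) : ℂ) by push_cast; ring, Complex.norm_real, Real.norm_eq_abs]
      have hsmall : ‖z * (↑x - ↑t)‖ ≤ 1 := by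
        rw [habs]
        calc ‖z‖ * |x - t| ≤ ‖z‖ * (1/(‖z‖+1)) := by
              apply mul_le_mul_of_nonneg_left _ (norm_nonneg z)
              exact htd.trans (hyδ.trans (min_le_right _ _))
          _ ≤ 1 := by
              rw [mul_one_div]
              rw [div_le_one (by positivity)]
              linarith
      rw [norm_mul]
      calc ‖B t‖ * ‖Complex.sin (z * (↑x - ↑t))‖
          ≤ C * (2 * ‖z * (↑x - ↑t)‖) := by
            apply mul_le_mul (h1 ht01) _ (norm_nonneg _) hC0
            exact sin_small hsmall
        _ = C * (2 * (‖z‖ * |x - t|)) := by rw [habs]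
        _ ≤ C * (2 * (‖z‖ * |y - x|)) := by
            apply mul_le_mul_of_nonneg_left _ hC0
            apply mul_le_mul_of_nonneg_left _ (by norm_num)
            exact mul_le_mul_of_nonneg_left htd (norm_nonneg z)
        _ = C * (2 * ‖z‖ * |y - x|) := by ring
    have hb2 := intervalIntegral.norm_integral_le_of_norm_le_const_ae hbound
    refine hb2.trans (le_of_eq ?_)
    rw [Real.norm_eq_abs, abs_mul]
    ring
  -- assemble
  have hsum := (((T1o.add T2o).add T3o).add T4o).add T5o
  refine hsum.congr' (Filter.EventuallyEq.of_eq (funext fun y => ?_)) Filter.EventuallyEq.rfl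
  simp only [Complex.real_smul, Complex.ofReal_sub]
  ring

/-- A continuous solution of the Volterra integral equation is differentiable,
its derivative is `−z·sin(zx) + ∫₀ˣ (B(α,β)φ)(t)·cos(z(x−t)) dt`, and it
satisfies `φ(0) = 1`, `φ′(0) = 0`. -/
theorem stmt_8 (V Q : ℝ → ℂ) (hVmeas : Measurable V) (hQmeas : Measurable Q)
    (hVb : eLpNorm V ⊤ (volume.restrict (Set.Ioo (0:ℝ) 1)) ≠ ⊤)
    (hQb : eLpNorm Q ⊤ (volume.restrict (Set.Ioo (0:ℝ) 1)) ≠ ⊤)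
    (α β : ℝ) (hα : α ∈ Set.Icc (0:ℝ) 1) (hβ : β ∈ Set.Icc (0:ℝ) 1)
    (z : ℂ) (hz : z ≠ 0)
    (φ : ℝ → ℂ) (hφC : ContinuousOn φ (Set.Icc (0:ℝ) 1))
    (hφeq : ∀ x ∈ Set.Icc (0:ℝ) 1,
      φ x = Complex.cos (z * ↑x)
        + z⁻¹ * ∫ t in (0:ℝ)..x, Bop V Q α β φ t * Complex.sin (z * (↑x - ↑t))) :
    (∀ x ∈ Set.Icc (0:ℝ) 1,
      HasDerivWithinAt φ
        (-z * Complex.sin (z * ↑x)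
          + ∫ t in (0:ℝ)..x, Bop V Q α β φ t * Complex.cos (z * (↑x - ↑t)))
        (Set.Icc (0:ℝ) 1) x) ∧
    φ 0 = 1 ∧
    HasDerivWithinAt φ 0 (Set.Icc (0:ℝ) 1) 0 := by
  have h01 : (0:ℝ) ∈ Set.Icc (0:ℝ) 1 := by constructor <;> norm_num
  set B : ℝ → ℂ := Bop V Q α β φ with hB
  have hBm : AEStronglyMeasurable B volume := Bop_meas hVmeas hQmeas hφC α β
  obtain ⟨M, hM⟩ := (isCompact_Icc (a := (0:ℝ)) (b := 1)).exists_bound_of_continuousOn hφC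
  have hM0 : 0 ≤ M := le_trans (norm_nonneg _) (hM 0 h01)
  have hext : ∀ y, ‖ext01 φ y‖ ≤ M := ext01_bdd hM0 hM
  set Cv : ℝ := (eLpNorm V ⊤ (volume.restrict (Set.Ioo (0:ℝ) 1))).toReal with hCv
  set Cq : ℝ := (eLpNorm Q ⊤ (volume.restrict (Set.Ioo (0:ℝ) 1))).toReal with hCq
  set C : ℝ := (Cv + Cq) * M with hCdef
  have hC0 : 0 ≤ C := by
    apply mul_nonneg _ hM0
    exact add_nonneg ENNReal.toReal_nonneg ENNReal.toReal_nonneg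
  have hC : ∀ᵐ t ∂volume, t ∈ Set.Ioc (0:ℝ) 1 → ‖B t‖ ≤ C := by
    have hVg := (ae_restrict_iff' measurableSet_Ioc).1 (ae_norm_le hVb)
    have hQg := (ae_restrict_iff' measurableSet_Ioc).1 (ae_norm_le hQb)
    filter_upwards [hVg, hQg] with t h1 h2 ht
    rw [hB, Bop]
    calc ‖V t * ext01 φ (t + α) + Q t * ext01 φ (t - β)‖
        ≤ ‖V t‖ * ‖ext01 φ (t + α)‖ + ‖Q t‖ * ‖ext01 φ (t - β)‖ := by
          refine (norm_add_le _ _).trans ?_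
          rw [norm_mul, norm_mul]
      _ ≤ Cv * M + Cq * M := by
          apply add_le_add
          · exact mul_le_mul (h1 ht) (hext _) (norm_nonneg _) ENNReal.toReal_nonneg
          · exact mul_le_mul (h2 ht) (hext _) (norm_nonneg _) ENNReal.toReal_nonneg
      _ = C := by rw [hCdef]; ring
  -- continuity and integrability of cos/sin integrands
  have hcc : Continuous fun t : ℝ => Complex.cos (z * ↑t) :=
    Complex.continuous_cos.comp (continuous_const.mul Complex.continuous_ofReal)
  have hcs : Continuous fun t : ℝ => Complex.sin (z * ↑t) :=
    Complex.continuous_sin.comp (continuous_const.mul Complex.continuous_ofReal)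
  obtain ⟨Dc, hDc⟩ := (isCompact_Icc (a := (0:ℝ)) (b := 1)).exists_bound_of_continuousOn
    hcc.continuousOn
  obtain ⟨Ds, hDs⟩ := (isCompact_Icc (a := (0:ℝ)) (b := 1)).exists_bound_of_continuousOn
    hcs.continuousOn
  have hDc' : ∀ t ∈ Set.Ioc (0:ℝ) 1, ‖Complex.cos (z * ↑t)‖ ≤ Dc :=
    fun t ht => hDc t (Set.Ioc_subset_Icc_self ht)
  have hDs' : ∀ t ∈ Set.Ioc (0:ℝ) 1, ‖Complex.sin (z * ↑t)‖ ≤ Ds :=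
    fun t ht => hDs t (Set.Ioc_subset_Icc_self ht)
  have hIc : ∀ x ∈ Set.Icc (0:ℝ) 1,
      IntervalIntegrable (fun t => B t * Complex.cos (z*↑t)) volume 0 x :=
    fun x hx => aux_int hBm hC hcc hDc' h01 hx
  have hIs : ∀ x ∈ Set.Icc (0:ℝ) 1,
      IntervalIntegrable (fun t => B t * Complex.sin (z*↑t)) volume 0 x :=
    fun x hx => aux_int hBm hC hcs hDs' h01 hx
  -- representation of the sine-kernel integral
  have hsinrep : ∀ x ∈ Set.Icc (0:ℝ) 1,
      (∫ t in (0:ℝ)..x, B t * Complex.sin (z * (↑x - ↑t)))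
        = Complex.sin (z*↑x) * (∫ t in (0:ℝ)..x, B t * Complex.cos (z*↑t))
          - Complex.cos (z*↑x) * (∫ t in (0:ℝ)..x, B t * Complex.sin (z*↑t)) := by
    intro x hx
    rw [← intervalIntegral.integral_const_mul, ← intervalIntegral.integral_const_mul,
      ← intervalIntegral.integral_sub ((hIc x hx).const_mul _) ((hIs x hx).const_mul _)]
    apply intervalIntegral.integral_congr
    intro t _
    simp only [mul_sub, Complex.sin_sub]
    ring
  have hcosrep : ∀ x ∈ Set.Icc (0:ℝ) 1,
      (∫ t in (0:ℝ)..x, B t * Complex.cos (z * (↑x - ↑t)))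
        = Complex.cos (z*↑x) * (∫ t in (0:ℝ)..x, B t * Complex.cos (z*↑t))
          + Complex.sin (z*↑x) * (∫ t in (0:ℝ)..x, B t * Complex.sin (z*↑t)) := by
    intro x hx
    rw [← intervalIntegral.integral_const_mul, ← intervalIntegral.integral_const_mul,
      ← intervalIntegral.integral_add ((hIc x hx).const_mul _) ((hIs x hx).const_mul _)]
    apply intervalIntegral.integral_congr
    intro t _
    simp only [mul_sub, Complex.cos_sub]
    ring
  -- φ agrees with the explicit function on Icc
  have hrep : ∀ x ∈ Set.Icc (0:ℝ) 1,
      φ x = Complex.cos (z*↑x)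
        + z⁻¹ * (Complex.sin (z*↑x) * (∫ t in (0:ℝ)..x, B t * Complex.cos (z*↑t))
          - Complex.cos (z*↑x) * (∫ t in (0:ℝ)..x, B t * Complex.sin (z*↑t))) := by
    intro x hx
    rw [hφeq x hx, hsinrep x hx]
  -- the main derivative statement
  have hmain : ∀ x ∈ Set.Icc (0:ℝ) 1,
      HasDerivWithinAt φ
        (-z * Complex.sin (z * ↑x)
          + ∫ t in (0:ℝ)..x, B t * Complex.cos (z * (↑x - ↑t)))
        (Set.Icc (0:ℝ) 1) x := by
    intro x hx
    have hH := keyH hBm hC0 hC z hx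
    have hcosd : HasDerivWithinAt (fun y : ℝ => Complex.cos (z * ↑y))
        (-Complex.sin (z * ↑x) * z) (Set.Icc (0:ℝ) 1) x :=
      (hasDerivAt_csz z x).hasDerivWithinAt
    have hψ := hcosd.add (hH.const_mul z⁻¹)
    have heq : -Complex.sin (z * ↑x) * z
        + z⁻¹ * (Complex.cos (z*↑x) * z * (∫ t in (0:ℝ)..x, B t * Complex.cos (z*↑t))
          + Complex.sin (z*↑x) * z * (∫ t in (0:ℝ)..x, B t * Complex.sin (z*↑t)))
        = -z * Complex.sin (z * ↑x)
          + ∫ t in (0:ℝ)..x, B t * Complex.cos (z * (↑x - ↑t)) := by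
      rw [hcosrep x hx]
      field_simp
    rw [heq] at hψ
    exact hψ.congr (fun y hy => hrep y hy) (hrep x hx)
  refine ⟨hmain, ?_, ?_⟩
  · have := hφeq 0 h01
    simpa using this
  · have := hmain 0 h01
    simpa using this
end

section
/- Let α, β ∈ [0,1] and z ∈ ℂ with z ≠ 0. Suppose φ : [0,1] → ℂ is continuously differentiable, φ(0) = 1, φ′(0) = 0, and φ′(x) = −∫₀ˣ ( z²·φ(t) − (B(α,β)φ)(t) ) dt for all x ∈ [0,1]. Then φ satisfies the Volterra integral equation φ(x) = cos(zx) + z⁻¹·∫₀ˣ (B(α,β)φ)(t)·sin(z(x−t)) dt for all x ∈ [0,1]. -/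
open MeasureTheory Set

/- ### Auxiliary lemmas -/

lemma hasDerivAt_zsin (z : ℂ) (t : ℝ) :
    HasDerivAt (fun t : ℝ => Complex.sin (z * t)) (z * Complex.cos (z * t)) t := by
  have h1 : HasDerivAt (fun w : ℂ => Complex.sin (z * w)) (z * Complex.cos (z * t)) (t : ℂ) := by
    have := HasDerivAt.comp (t : ℂ) (Complex.hasDerivAt_sin (z * t))
      ((hasDerivAt_id (t : ℂ)).const_mul z)
    exact this.congr_deriv (by ring)
  exact h1.comp_ofReal

lemma hasDerivAt_zcos (z : ℂ) (t : ℝ) :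
    HasDerivAt (fun t : ℝ => Complex.cos (z * t)) (-(z * Complex.sin (z * t))) t := by
  have h1 : HasDerivAt (fun w : ℂ => Complex.cos (z * w)) (-(z * Complex.sin (z * t))) (t : ℂ) := by
    have h0 := HasDerivAt.comp (t : ℂ) (Complex.hasDerivAt_cos (z * t))
      ((hasDerivAt_id (t : ℂ)).const_mul z)
    exact h0.congr_deriv (by ring)
  exact h1.comp_ofReal

lemma continuous_zsin (z : ℂ) : Continuous (fun t : ℝ => Complex.sin (z * t)) :=
  Complex.continuous_sin.comp (continuous_const.mul Complex.continuous_ofReal)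

lemma continuous_zcos (z : ℂ) : Continuous (fun t : ℝ => Complex.cos (z * t)) :=
  Complex.continuous_cos.comp (continuous_const.mul Complex.continuous_ofReal)

lemma integral_zsin (z : ℂ) (hz : z ≠ 0) (t x : ℝ) :
    ∫ s in t..x, Complex.sin (z * s) = z⁻¹ * (Complex.cos (z * t) - Complex.cos (z * x)) := by
  have key : ∫ s in t..x, z * Complex.sin (z * s)
      = (fun s : ℝ => -Complex.cos (z * s)) x - (fun s : ℝ => -Complex.cos (z * s)) t := by
    apply intervalIntegral.integral_eq_sub_of_hasDerivAt
    · intro s _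
      exact (hasDerivAt_zcos z s).neg.congr_deriv (neg_neg _)
    · exact (continuous_const.mul (continuous_zsin z)).intervalIntegrable _ _
  rw [intervalIntegral.integral_const_mul] at key
  field_simp
  linear_combination key

lemma integral_zcos (z : ℂ) (hz : z ≠ 0) (t x : ℝ) :
    ∫ s in t..x, Complex.cos (z * s) = z⁻¹ * (Complex.sin (z * x) - Complex.sin (z * t)) := by
  have key : ∫ s in t..x, z * Complex.cos (z * s)
      = (fun s : ℝ => Complex.sin (z * s)) x - (fun s : ℝ => Complex.sin (z * s)) t := by
    apply intervalIntegral.integral_eq_sub_of_hasDerivAt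
    · intro s _
      exact hasDerivAt_zsin z s
    · exact (continuous_const.mul (continuous_zcos z)).intervalIntegrable _ _
  rw [intervalIntegral.integral_const_mul] at key
  field_simp
  linear_combination key

/-- FTC on `[0,1]` for a function with a continuous derivative within `Icc 0 1`. -/
lemma ftc01 {ψ dψ : ℝ → ℂ} (hψC : ContinuousOn ψ (Icc 0 1))
    (hd : ∀ t ∈ Icc (0:ℝ) 1, HasDerivWithinAt ψ (dψ t) (Icc 0 1) t)
    (hdC : ContinuousOn dψ (Icc 0 1)) {x : ℝ} (hx : x ∈ Icc (0:ℝ) 1) :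
    ∫ t in (0:ℝ)..x, dψ t = ψ x - ψ 0 := by
  apply intervalIntegral.integral_eq_sub_of_hasDeriv_right_of_le hx.1
  · exact hψC.mono (Icc_subset_Icc le_rfl hx.2)
  · intro t ht
    exact ((hd t ⟨ht.1.le, (ht.2.le.trans hx.2)⟩).hasDerivAt
      (Icc_mem_nhds ht.1 (lt_of_lt_of_le ht.2 hx.2))).hasDerivWithinAt
  · exact (hdC.mono (by rw [uIcc_of_le hx.1]; exact Icc_subset_Icc le_rfl hx.2)).intervalIntegrable

/-- Product of an integrable function and a bounded a.e.-strongly-measurable function. -/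
lemma integrableOn_mul_bdd {s : Set ℝ} (hs : MeasurableSet s) {f g : ℝ → ℂ}
    (hf : IntegrableOn f s) (hg : AEStronglyMeasurable g (volume.restrict s))
    {M : ℝ} (hM : ∀ t ∈ s, ‖g t‖ ≤ M) : IntegrableOn (fun t => f t * g t) s := by
  apply Integrable.mono' (hf.norm.mul_const M) (hf.aestronglyMeasurable.mul hg)
  filter_upwards [ae_restrict_mem hs] with t ht
  have hb : ‖f t * g t‖ ≤ ‖f t‖ * M := by
    rw [norm_mul]
    exact mul_le_mul_of_nonneg_left (hM t ht) (norm_nonneg _)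
  simpa using hb

/-- Fubini for the triangle `0 < t < s ≤ x`. -/
lemma swap_triangle (f k : ℝ → ℂ) {x : ℝ} (hx : 0 ≤ x)
    (hf : IntegrableOn f (Ioc 0 x)) (hk : Continuous k) :
    ∫ t in (0:ℝ)..x, f t * (∫ s in t..x, k s)
      = ∫ s in (0:ℝ)..x, (∫ t in (0:ℝ)..s, f t) * k s := by
  obtain ⟨M, hM⟩ := isCompact_Icc.exists_bound_of_continuousOn
    (hk.continuousOn : ContinuousOn k (Icc 0 x))
  have hM0 : 0 ≤ M := le_trans (norm_nonneg _) (hM 0 ⟨le_rfl, hx⟩)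
  set μ := volume.restrict (Ioc (0:ℝ) x) with hμdef
  haveI : IsFiniteMeasure μ := ⟨by rw [hμdef, Measure.restrict_apply_univ]; exact measure_Ioc_lt_top⟩
  set F : ℝ → ℝ → ℂ := fun t s => (Ioi t).indicator (fun s => f t * k s) s with hFdef
  have hFm : AEStronglyMeasurable (Function.uncurry F) (μ.prod μ) := by
    have heq : Function.uncurry F = fun p : ℝ × ℝ =>
        ({q : ℝ × ℝ | q.1 < q.2}).indicator (fun q => f q.1 * k q.2) p := by
      funext p
      by_cases hp : p.1 < p.2
      · simp [hFdef, Function.uncurry, indicator_of_mem, hp, Set.mem_Ioi, Set.mem_setOf_eq]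
      · simp [hFdef, Function.uncurry, indicator_of_notMem, hp, Set.mem_Ioi, Set.mem_setOf_eq]
    rw [heq]
    exact (((hf.aestronglyMeasurable.comp_fst).mul
      ((hk.comp continuous_snd).aestronglyMeasurable)).indicator
      (measurableSet_lt measurable_fst measurable_snd))
  have hFt : ∀ t : ℝ, Integrable (F t) μ := by
    intro t
    exact ((hk.integrableOn_Ioc.const_mul (f t)).indicator measurableSet_Ioi)
  have hFint : Integrable (Function.uncurry F) (μ.prod μ) := by
    rw [integrable_prod_iff hFm]
    constructor
    · exact Filter.Eventually.of_forall fun t => hFt t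
    · apply Integrable.mono' (hf.norm.mul_const (M * (μ Set.univ).toReal))
        (hFm.norm.integral_prod_right')
      apply Filter.Eventually.of_forall
      intro t
      have hb : ∀ᵐ s ∂μ, ‖F t s‖ ≤ ‖f t‖ * M := by
        filter_upwards [ae_restrict_mem measurableSet_Ioc] with s hs
        by_cases hts : s ∈ Ioi t
        · rw [hFdef]
          simp only [indicator_of_mem hts, norm_mul]
          exact mul_le_mul_of_nonneg_left (hM s ⟨le_of_lt hs.1, hs.2⟩) (norm_nonneg _)
        · rw [hFdef]
          simp only [indicator_of_notMem hts, norm_zero]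
          positivity
      have h1 : ∫ s, ‖F t s‖ ∂μ ≤ ∫ _s, ‖f t‖ * M ∂μ :=
        integral_mono_ae (hFt t).norm (integrable_const _) hb
      rw [integral_const] at h1
      have h2 : (0:ℝ) ≤ ∫ s, ‖F t s‖ ∂μ := integral_nonneg fun s => norm_nonneg _
      simp only [Function.uncurry_apply_pair]
      rw [Real.norm_of_nonneg h2]
      calc ∫ s, ‖F t s‖ ∂μ ≤ (μ Set.univ).toReal • (‖f t‖ * M) := h1
        _ = ‖f t‖ * (M * (μ Set.univ).toReal) := by simp [smul_eq_mul]; ring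
  have hswap := integral_integral_swap hFint
  rw [intervalIntegral.integral_of_le hx, intervalIntegral.integral_of_le hx]
  calc ∫ t in Ioc (0:ℝ) x, f t * ∫ s in t..x, k s
      = ∫ t, (∫ s, F t s ∂μ) ∂μ := by
        apply setIntegral_congr_fun measurableSet_Ioc
        intro t ht
        have hset : Ioc 0 x ∩ Ioi t = Ioc t x := by
          ext s
          simp only [mem_inter_iff, mem_Ioi, mem_Ioc]
          constructor
          · rintro ⟨⟨_, h2⟩, h3⟩; exact ⟨h3, h2⟩
          · rintro ⟨h1, h2⟩; exact ⟨⟨ht.1.trans h1, h2⟩, h1⟩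
        show f t * (∫ s in t..x, k s)
          = ∫ s in Ioc (0:ℝ) x, (Ioi t).indicator (fun s => f t * k s) s
        rw [setIntegral_indicator measurableSet_Ioi, hset,
          intervalIntegral.integral_of_le ht.2]
        simp_rw [← smul_eq_mul]
        rw [integral_smul]
    _ = ∫ s, (∫ t, F t s ∂μ) ∂μ := hswap
    _ = ∫ s in Ioc (0:ℝ) x, (∫ t in (0:ℝ)..s, f t) * k s := by
        apply setIntegral_congr_fun measurableSet_Ioc
        intro s hs
        have hfun : ∀ t : ℝ, F t s = (Iio s).indicator (fun t => f t * k s) t := by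
          intro t
          by_cases hts : t < s
          · simp [hFdef, indicator_of_mem, hts, Set.mem_Ioi, Set.mem_Iio]
          · simp [hFdef, indicator_of_notMem, hts, Set.mem_Ioi, Set.mem_Iio]
        have hset : Ioc 0 x ∩ Iio s = Ioo 0 s := by
          ext t
          simp only [mem_inter_iff, mem_Iio, mem_Ioc, mem_Ioo]
          constructor
          · rintro ⟨⟨h1, _⟩, h3⟩; exact ⟨h1, h3⟩
          · rintro ⟨h1, h2⟩; exact ⟨⟨h1, h2.le.trans hs.2⟩, h2⟩
        show (∫ t in Ioc (0:ℝ) x, F t s) = (∫ t in (0:ℝ)..s, f t) * k s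
        rw [setIntegral_congr_fun measurableSet_Ioc (fun t _ => hfun t),
          setIntegral_indicator measurableSet_Iio, hset,
          ← integral_Ioc_eq_integral_Ioo, ← intervalIntegral.integral_of_le hs.1.le,
          intervalIntegral.integral_mul_const]

lemma Bop_integrableOn (V Q : ℝ → ℂ) (hVmeas : Measurable V) (hQmeas : Measurable Q)
    (hVb : eLpNorm V ⊤ (volume.restrict (Set.Ioo (0:ℝ) 1)) ≠ ⊤)
    (hQb : eLpNorm Q ⊤ (volume.restrict (Set.Ioo (0:ℝ) 1)) ≠ ⊤)
    (α β : ℝ) (φ : ℝ → ℂ) (hφC : ContinuousOn φ (Set.Icc (0:ℝ) 1)) :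
    IntegrableOn (Bop V Q α β φ) (Ioc 0 1) volume := by
  obtain ⟨Mφ, hMφ⟩ := isCompact_Icc.exists_bound_of_continuousOn hφC
  have hMφ0 : 0 ≤ Mφ := le_trans (norm_nonneg _) (hMφ 0 ⟨le_rfl, zero_le_one⟩)
  have hext_bdd : ∀ y : ℝ, ‖ext01 φ y‖ ≤ Mφ := by
    intro y
    unfold ext01
    by_cases hy : y ∈ Ioo (0:ℝ) 1
    · rw [indicator_of_mem hy]; exact hMφ y ⟨hy.1.le, hy.2.le⟩
    · rw [indicator_of_notMem hy]; simpa
  have hext_m : AEStronglyMeasurable (ext01 φ) volume := by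
    unfold ext01
    rw [aestronglyMeasurable_indicator_iff measurableSet_Ioo]
    exact (hφC.mono Ioo_subset_Icc_self).aestronglyMeasurable measurableSet_Ioo
  have hsh1 : AEStronglyMeasurable (fun t => ext01 φ (t + α)) volume :=
    hext_m.comp_measurePreserving (measurePreserving_add_right volume α)
  have hsh2 : AEStronglyMeasurable (fun t => ext01 φ (t - β)) volume :=
    hext_m.comp_measurePreserving (measurePreserving_sub_right volume β)
  set Cv := (eLpNormEssSup V (volume.restrict (Ioo (0:ℝ) 1))).toReal with hCv
  set Cq := (eLpNormEssSup Q (volume.restrict (Ioo (0:ℝ) 1))).toReal with hCq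
  have hVfin : eLpNormEssSup V (volume.restrict (Ioo (0:ℝ) 1)) ≠ ⊤ := by
    rwa [← eLpNorm_exponent_top]
  have hQfin : eLpNormEssSup Q (volume.restrict (Ioo (0:ℝ) 1)) ≠ ⊤ := by
    rwa [← eLpNorm_exponent_top]
  have hrestr : volume.restrict (Ioc (0:ℝ) 1) = volume.restrict (Ioo (0:ℝ) 1) :=
    (Measure.restrict_congr_set Ioo_ae_eq_Ioc).symm
  have hVae : ∀ᵐ t ∂(volume.restrict (Ioc (0:ℝ) 1)), ‖V t‖ ≤ Cv := by
    rw [hrestr]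
    filter_upwards [ae_le_eLpNormEssSup (f := V) (μ := volume.restrict (Ioo (0:ℝ) 1))] with t ht
    have := ENNReal.toReal_mono hVfin ht
    simpa using this
  have hQae : ∀ᵐ t ∂(volume.restrict (Ioc (0:ℝ) 1)), ‖Q t‖ ≤ Cq := by
    rw [hrestr]
    filter_upwards [ae_le_eLpNormEssSup (f := Q) (μ := volume.restrict (Ioo (0:ℝ) 1))] with t ht
    have := ENNReal.toReal_mono hQfin ht
    simpa using this
  have hmeas : AEStronglyMeasurable (Bop V Q α β φ) (volume.restrict (Ioc (0:ℝ) 1)) := by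
    have h1 : AEStronglyMeasurable (fun x : ℝ => V x * ext01 φ (x + α))
        (volume.restrict (Ioc (0:ℝ) 1)) :=
      hVmeas.aestronglyMeasurable.restrict.mul hsh1.restrict
    have h2 : AEStronglyMeasurable (fun x : ℝ => Q x * ext01 φ (x - β))
        (volume.restrict (Ioc (0:ℝ) 1)) :=
      hQmeas.aestronglyMeasurable.restrict.mul hsh2.restrict
    exact h1.add h2
  apply Integrable.mono' (g := fun _ => (Cv + Cq) * Mφ)
    (integrableOn_const measure_Ioc_lt_top.ne) hmeas
  filter_upwards [hVae, hQae] with t htV htQ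
  have hCv0 : 0 ≤ Cv := le_trans (norm_nonneg _) htV
  have hCq0 : 0 ≤ Cq := le_trans (norm_nonneg _) htQ
  calc ‖Bop V Q α β φ t‖
      ≤ ‖V t * ext01 φ (t + α)‖ + ‖Q t * ext01 φ (t - β)‖ := norm_add_le _ _
    _ = ‖V t‖ * ‖ext01 φ (t + α)‖ + ‖Q t‖ * ‖ext01 φ (t - β)‖ := by rw [norm_mul, norm_mul]
    _ ≤ Cv * Mφ + Cq * Mφ := by
        gcongr
        · exact hext_bdd _
        · exact hext_bdd _
    _ = (Cv + Cq) * Mφ := by ring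

/-- A `C¹` solution of the integrated Cauchy problem
`−φ″ + B(α,β)φ = z²φ`, `φ(0) = 1`, `φ′(0) = 0` satisfies the Volterra
integral equation. -/
theorem stmt_9 (V Q : ℝ → ℂ) (hVmeas : Measurable V) (hQmeas : Measurable Q)
    (hVb : eLpNorm V ⊤ (volume.restrict (Set.Ioo (0:ℝ) 1)) ≠ ⊤)
    (hQb : eLpNorm Q ⊤ (volume.restrict (Set.Ioo (0:ℝ) 1)) ≠ ⊤)
    (α β : ℝ) (hα : α ∈ Set.Icc (0:ℝ) 1) (hβ : β ∈ Set.Icc (0:ℝ) 1)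
    (z : ℂ) (hz : z ≠ 0)
    (φ dφ : ℝ → ℂ)
    (hφC : ContinuousOn φ (Set.Icc (0:ℝ) 1))
    (hdφC : ContinuousOn dφ (Set.Icc (0:ℝ) 1))
    (hderiv : ∀ x ∈ Set.Icc (0:ℝ) 1, HasDerivWithinAt φ (dφ x) (Set.Icc (0:ℝ) 1) x)
    (hφ0 : φ 0 = 1) (hdφ0 : dφ 0 = 0)
    (heq : ∀ x ∈ Set.Icc (0:ℝ) 1,
      dφ x = -∫ t in (0:ℝ)..x, (z ^ 2 * φ t - Bop V Q α β φ t)) :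
    ∀ x ∈ Set.Icc (0:ℝ) 1,
      φ x = Complex.cos (z * ↑x)
        + z⁻¹ * ∫ t in (0:ℝ)..x, Bop V Q α β φ t * Complex.sin (z * (↑x - ↑t)) := by
  intro x hx
  obtain ⟨hx0, hx1⟩ := hx
  set b : ℝ → ℂ := Bop V Q α β φ with hbdef
  set h : ℝ → ℂ := fun t => b t - z ^ 2 * φ t with hhdef
  -- dφ is the integral of h
  have hdφeq : ∀ y ∈ Set.Icc (0:ℝ) 1, dφ y = ∫ t in (0:ℝ)..y, h t := by
    intro y hy
    have := heq y hy
    rw [← intervalIntegral.integral_neg] at this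
    simpa [hhdef, neg_sub] using this
  -- integrability
  have hbInt1 : IntegrableOn b (Ioc 0 1) volume :=
    Bop_integrableOn V Q hVmeas hQmeas hVb hQb α β φ hφC
  have hbInt : IntegrableOn b (Ioc 0 x) volume :=
    hbInt1.mono_set (Ioc_subset_Ioc le_rfl hx1)
  have hφInt : IntegrableOn φ (Ioc 0 x) volume :=
    ((hφC.mono (Icc_subset_Icc le_rfl hx1)).integrableOn_Icc).mono_set Ioc_subset_Icc_self
  have hhInt : IntegrableOn h (Ioc 0 x) volume := hbInt.sub (hφInt.const_mul (z ^ 2))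
  have husub : uIcc (0:ℝ) x ⊆ Set.Icc (0:ℝ) 1 := by
    rw [uIcc_of_le hx0]; exact Icc_subset_Icc le_rfl hx1
  -- bounds for cos, sin on [0,1]
  obtain ⟨Mc, hMc⟩ := isCompact_Icc.exists_bound_of_continuousOn
    ((continuous_zcos z).continuousOn : ContinuousOn _ (Set.Icc (0:ℝ) 1))
  obtain ⟨Ms, hMs⟩ := isCompact_Icc.exists_bound_of_continuousOn
    ((continuous_zsin z).continuousOn : ContinuousOn _ (Set.Icc (0:ℝ) 1))
  have hIocsub : Ioc (0:ℝ) x ⊆ Set.Icc (0:ℝ) 1 := fun t ht => ⟨ht.1.le, ht.2.trans hx1⟩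
  have hhcInt : IntegrableOn (fun t => h t * Complex.cos (z * t)) (Ioc 0 x) volume :=
    integrableOn_mul_bdd measurableSet_Ioc hhInt
      ((continuous_zcos z).aestronglyMeasurable.restrict)
      (fun t ht => hMc _ (hIocsub ht))
  have hhsInt : IntegrableOn (fun t => h t * Complex.sin (z * t)) (Ioc 0 x) volume :=
    integrableOn_mul_bdd measurableSet_Ioc hhInt
      ((continuous_zsin z).aestronglyMeasurable.restrict)
      (fun t ht => hMs _ (hIocsub ht))
  have hbcInt : IntegrableOn (fun t => b t * Complex.cos (z * t)) (Ioc 0 x) volume :=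
    integrableOn_mul_bdd measurableSet_Ioc hbInt
      ((continuous_zcos z).aestronglyMeasurable.restrict)
      (fun t ht => hMc _ (hIocsub ht))
  have hbsInt : IntegrableOn (fun t => b t * Complex.sin (z * t)) (Ioc 0 x) volume :=
    integrableOn_mul_bdd measurableSet_Ioc hbInt
      ((continuous_zsin z).aestronglyMeasurable.restrict)
      (fun t ht => hMs _ (hIocsub ht))
  have toII : ∀ {g : ℝ → ℂ}, IntegrableOn g (Ioc 0 x) volume →
      IntervalIntegrable g volume 0 x := fun hg =>
    (intervalIntegrable_iff_integrableOn_Ioc_of_le hx0).2 hg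
  -- interval integrability of continuous products
  have hφcII : IntervalIntegrable (fun t => φ t * Complex.cos (z * t)) volume 0 x :=
    ((hφC.mono husub).mul ((continuous_zcos z).continuousOn)).intervalIntegrable
  have hφsII : IntervalIntegrable (fun t => φ t * Complex.sin (z * t)) volume 0 x :=
    ((hφC.mono husub).mul ((continuous_zsin z).continuousOn)).intervalIntegrable
  have hdφcII : IntervalIntegrable (fun t => dφ t * Complex.cos (z * t)) volume 0 x :=
    ((hdφC.mono husub).mul ((continuous_zcos z).continuousOn)).intervalIntegrable
  have hdφsII : IntervalIntegrable (fun t => dφ t * Complex.sin (z * t)) volume 0 x :=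
    ((hdφC.mono husub).mul ((continuous_zsin z).continuousOn)).intervalIntegrable
  -- abbreviations for the six integrals
  set Ic := ∫ t in (0:ℝ)..x, b t * Complex.cos (z * t) with hIc
  set Is := ∫ t in (0:ℝ)..x, b t * Complex.sin (z * t) with hIs
  set Hc := ∫ t in (0:ℝ)..x, h t * Complex.cos (z * t) with hHc
  set Hs := ∫ t in (0:ℝ)..x, h t * Complex.sin (z * t) with hHs
  set Pc := ∫ t in (0:ℝ)..x, φ t * Complex.cos (z * t) with hPc
  set Ps := ∫ t in (0:ℝ)..x, φ t * Complex.sin (z * t) with hPs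
  set Dc := ∫ t in (0:ℝ)..x, dφ t * Complex.cos (z * t) with hDc
  set Ds := ∫ t in (0:ℝ)..x, dφ t * Complex.sin (z * t) with hDs
  -- FTC identities
  have R1 : Ds + z * Pc = φ x * Complex.sin (z * x) := by
    have hA : ∫ t in (0:ℝ)..x,
        (dφ t * Complex.sin (z * t) + z * (φ t * Complex.cos (z * t)))
        = φ x * Complex.sin (z * x) - φ 0 * Complex.sin (z * 0) := by
      apply ftc01 (dψ := fun t => dφ t * Complex.sin (z * t) + z * (φ t * Complex.cos (z * t)))
        (hφC.mul ((continuous_zsin z).continuousOn)) _ _ ⟨hx0, hx1⟩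
      · intro t ht
        have := (hderiv t ht).mul ((hasDerivAt_zsin z t).hasDerivWithinAt)
        exact this.congr_deriv (by ring)
      · exact (hdφC.mul ((continuous_zsin z).continuousOn)).add
          (continuousOn_const.mul (hφC.mul ((continuous_zcos z).continuousOn)))
    rw [intervalIntegral.integral_add hdφsII (hφcII.const_mul z),
      intervalIntegral.integral_const_mul] at hA
    simpa using hA
  have R2 : Dc - z * Ps = φ x * Complex.cos (z * x) - 1 := by
    have hA : ∫ t in (0:ℝ)..x,
        (dφ t * Complex.cos (z * t) - z * (φ t * Complex.sin (z * t)))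
        = φ x * Complex.cos (z * x) - φ 0 * Complex.cos (z * 0) := by
      apply ftc01 (dψ := fun t => dφ t * Complex.cos (z * t) - z * (φ t * Complex.sin (z * t)))
        (hφC.mul ((continuous_zcos z).continuousOn)) _ _ ⟨hx0, hx1⟩
      · intro t ht
        have := (hderiv t ht).mul ((hasDerivAt_zcos z t).hasDerivWithinAt)
        exact this.congr_deriv (by ring)
      · exact (hdφC.mul ((continuous_zcos z).continuousOn)).sub
          (continuousOn_const.mul (hφC.mul ((continuous_zsin z).continuousOn)))
    rw [intervalIntegral.integral_sub hdφcII (hφsII.const_mul z),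
      intervalIntegral.integral_const_mul] at hA
    simpa [hφ0] using hA
  -- Fubini identities
  have R3 : z * Ds = Hc - Complex.cos (z * x) * dφ x := by
    have hsw := swap_triangle h (fun s => Complex.sin (z * s)) hx0 hhInt (continuous_zsin z)
    have hR : ∫ s in (0:ℝ)..x, (∫ t in (0:ℝ)..s, h t) * Complex.sin (z * s) = Ds := by
      apply intervalIntegral.integral_congr
      intro s hs
      show (∫ t in (0:ℝ)..s, h t) * Complex.sin (z * s) = dφ s * Complex.sin (z * s)
      rw [hdφeq s (husub hs)]
    have hL : ∫ t in (0:ℝ)..x, h t * (∫ s in t..x, Complex.sin (z * s))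
        = z⁻¹ * Hc - z⁻¹ * Complex.cos (z * x) * dφ x := by
      have hfun : (fun t : ℝ => h t * (∫ s in t..x, Complex.sin (z * s)))
          = fun t : ℝ => z⁻¹ * (h t * Complex.cos (z * t))
            - (z⁻¹ * Complex.cos (z * x)) * h t := by
        funext t
        rw [integral_zsin z hz t x]
        ring
      rw [hfun, intervalIntegral.integral_sub ((toII hhcInt).const_mul _)
        ((toII hhInt).const_mul _), intervalIntegral.integral_const_mul,
        intervalIntegral.integral_const_mul, ← hdφeq x ⟨hx0, hx1⟩]
    rw [hL, hR] at hsw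
    rw [← hsw]
    field_simp
  have R4 : z * Dc = Complex.sin (z * x) * dφ x - Hs := by
    have hsw := swap_triangle h (fun s => Complex.cos (z * s)) hx0 hhInt (continuous_zcos z)
    have hR : ∫ s in (0:ℝ)..x, (∫ t in (0:ℝ)..s, h t) * Complex.cos (z * s) = Dc := by
      apply intervalIntegral.integral_congr
      intro s hs
      show (∫ t in (0:ℝ)..s, h t) * Complex.cos (z * s) = dφ s * Complex.cos (z * s)
      rw [hdφeq s (husub hs)]
    have hL : ∫ t in (0:ℝ)..x, h t * (∫ s in t..x, Complex.cos (z * s))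
        = z⁻¹ * Complex.sin (z * x) * dφ x - z⁻¹ * Hs := by
      have hfun : (fun t : ℝ => h t * (∫ s in t..x, Complex.cos (z * s)))
          = fun t : ℝ => (z⁻¹ * Complex.sin (z * x)) * h t
            - z⁻¹ * (h t * Complex.sin (z * t)) := by
        funext t
        rw [integral_zcos z hz t x]
        ring
      rw [hfun, intervalIntegral.integral_sub ((toII hhInt).const_mul _)
        ((toII hhsInt).const_mul _), intervalIntegral.integral_const_mul,
        intervalIntegral.integral_const_mul, ← hdφeq x ⟨hx0, hx1⟩]
    rw [hL, hR] at hsw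
    rw [← hsw]
    field_simp
  -- linear relations between the B-integrals and h-integrals
  have R5 : Hc + z ^ 2 * Pc = Ic := by
    rw [hHc, hPc, hIc, ← intervalIntegral.integral_const_mul,
      ← intervalIntegral.integral_add (toII hhcInt) ((hφcII.const_mul _))]
    apply intervalIntegral.integral_congr
    intro t _
    simp only [hhdef]
    ring
  have R6 : Hs + z ^ 2 * Ps = Is := by
    rw [hHs, hPs, hIs, ← intervalIntegral.integral_const_mul,
      ← intervalIntegral.integral_add (toII hhsInt) ((hφsII.const_mul _))]
    apply intervalIntegral.integral_congr
    intro t _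
    simp only [hhdef]
    ring
  -- expand sin(z(x-t))
  have hgoalInt : ∫ t in (0:ℝ)..x, b t * Complex.sin (z * (↑x - ↑t))
      = Complex.sin (z * x) * Ic - Complex.cos (z * x) * Is := by
    have hfun : (fun t : ℝ => b t * Complex.sin (z * (↑x - ↑t)))
        = fun t : ℝ => Complex.sin (z * x) * (b t * Complex.cos (z * t))
          - Complex.cos (z * x) * (b t * Complex.sin (z * t)) := by
      funext t
      rw [mul_sub, Complex.sin_sub]
      ring
    rw [hfun, intervalIntegral.integral_sub ((toII hbcInt).const_mul _)
      ((toII hbsInt).const_mul _), intervalIntegral.integral_const_mul,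
      intervalIntegral.integral_const_mul, ← hIc, ← hIs]
  rw [hgoalInt]
  have trig : Complex.sin (z * x) ^ 2 + Complex.cos (z * x) ^ 2 = 1 :=
    Complex.sin_sq_add_cos_sq _
  have G0 : z * φ x = z * Complex.cos (z * x)
      + (Complex.sin (z * x) * Ic - Complex.cos (z * x) * Is) := by
    linear_combination (Complex.sin (z * x)) * R5 - (Complex.cos (z * x)) * R6
      + (Complex.sin (z * x)) * R3 + (Complex.cos (z * x)) * R4
      - (z * Complex.sin (z * x)) * R1 - (z * Complex.cos (z * x)) * R2
      - (z * φ x) * trig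
  field_simp
  linear_combination G0
end
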